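/- arXiv:2503.02458 — 5 statements merged into one kernel-verified Lean document; each statement's English description precedes it below -/
import Mathlib

section
/- Let k be a field of characteristic 0 and let R be a nontrivial commutative k-algebra. Let P ∈ k[x] be a univariate polynomial, and let Q, r ∈ R with r not a zero divisor in R. Write P̃ ∈ R[x] for the image of P under the canonical ring map k[x] → R[x]. Suppose that in R[x] one has P̃(x + r) = P̃(x) + Q, i.e., the composition of P̃ with the polynomial x + C(r) equals P̃ + C(Q). Then there exist Q', α ∈ R such that Q = r·Q' and P̃ = Q'·x + α. In particular P has degree at most 1, Q' is the image in R of the coefficient of x in P, and α is the image in R of the constant coefficient of P. -/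
/-!
If `d = deg P ≥ 2`, the coefficient of `x^(d-1)` in `P̃(x + r) - P̃(x)` is `d · lc(P) · r`,
which must vanish; as `r` is not a zero divisor and `d · lc(P) ≠ 0` in characteristic 0, this
is impossible. So `P̃` is linear, and for `P̃ = a x + b` the shift adds exactly the constant `a r`.
-/

open Polynomial

theorem coeff_taylor_natDegree_sub_one {R : Type*} [CommSemiring R] (f : R[X]) (r : R) :
    (taylor r f).coeff (f.natDegree - 1) =
      f.coeff (f.natDegree - 1) + f.natDegree * f.leadingCoeff * r := by
  set d := f.natDegree
  rcases Nat.eq_zero_or_pos d with hd0 | hd0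
  · rw [hd0, Nat.cast_zero, zero_mul, zero_mul, add_zero, Nat.zero_sub, taylor_coeff_zero,
      eq_C_of_natDegree_eq_zero hd0, eval_C, coeff_C_zero]
  have hlin : (hasseDeriv (d - 1) f).natDegree ≤ 1 :=
    (natDegree_hasseDeriv_le f (d - 1)).trans (by omega)
  have hcoeff0 : (hasseDeriv (d - 1) f).coeff 0 = f.coeff (d - 1) := by
    simp [hasseDeriv_coeff]
  have hcoeff1 : (hasseDeriv (d - 1) f).coeff 1 = d * f.leadingCoeff := by
    rw [hasseDeriv_coeff, show 1 + (d - 1) = d by omega,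
      Nat.choose_symm_of_eq_add (show d = d - 1 + 1 by omega),
      Nat.choose_one_right]
    rfl
  rw [taylor_coeff, eq_X_add_C_of_natDegree_le_one hlin, hcoeff0, hcoeff1]
  simp only [eval_add, eval_mul, eval_C, eval_X]
  ring

theorem C_mul_X_add_C_comp_X_add_C {R : Type*} [CommRing R] (a b r : R) :
    (C a * X + C b).comp (X + C r) = C a * X + C b + C (a * r) := by
  simp only [add_comp, mul_comp, C_comp, X_comp, C_mul]
  ring

theorem natDegree_mul_leadingCoeff_mul_eq_zero_of_comp_X_add_C_eq_add_C
    {R : Type*} [CommRing R] {f : R[X]} {Q r : R} (h : f.comp (X + C r) = f + C Q) (hf : 2 ≤ f.natDegree) :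
    f.natDegree * f.leadingCoeff * r = 0 := by
  have hcoeff := congrArg (coeff · (f.natDegree - 1)) h
  simpa only [← taylor_apply, coeff_taylor_natDegree_sub_one, coeff_add,
    coeff_C_of_ne_zero (show f.natDegree - 1 ≠ 0 by omega), add_zero, add_eq_left] using hcoeff

theorem natDegree_le_one_of_map_comp_X_add_C_eq_add_C {k R : Type*} [Field k] [CharZero k]
    [CommRing R] [Nontrivial R] [Algebra k R] {P : k[X]} {Q r : R}
    (hr : ∀ s : R, r * s = 0 → s = 0)
    (h : (P.map (algebraMap k R)).comp (X + C r) = P.map (algebraMap k R) + C Q) :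
    P.natDegree ≤ 1 := by
  by_contra! hP
  have hinj : Function.Injective (algebraMap k R) := (algebraMap k R).injective
  have hzero := natDegree_mul_leadingCoeff_mul_eq_zero_of_comp_X_add_C_eq_add_C h
    (by rwa [natDegree_map_eq_of_injective hinj])
  rw [natDegree_map_eq_of_injective hinj, leadingCoeff_map_of_injective hinj, mul_comm,
    ← map_natCast (algebraMap k R), ← map_mul] at hzero
  have hlc : (P.natDegree : k) * P.leadingCoeff ≠ 0 :=
    mul_ne_zero (by norm_cast; omega) (leadingCoeff_ne_zero.mpr (by rintro rfl; simp at hP))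
  exact hlc (hinj ((hr _ hzero).trans (map_zero _).symm))

/-- Lemma 2.4 of the paper.
Let `k` be a field of characteristic 0 and `R` a nontrivial commutative `k`-algebra.
Let `P ∈ k[x]`, let `Q, r ∈ R` with `r` not a zero divisor, and let `P̃` be the image
of `P` in `R[x]`. If `P̃(x + r) = P̃(x) + Q` then there are `Q', α ∈ R` with `Q = r·Q'`
and `P̃ = Q'·x + α`; in particular `P` has degree at most 1, `Q'` is the image of the
coefficient of `x` in `P`, and `α` is the image of the constant coefficient of `P`. -/
theorem statement0 {k R : Type*} [Field k] [CharZero k] [CommRing R] [Nontrivial R]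
    [Algebra k R] (P : Polynomial k) (Q r : R)
    (hr : ∀ s : R, r * s = 0 → s = 0)
    (h : (P.map (algebraMap k R)).comp (X + C r) = P.map (algebraMap k R) + C Q) :
    ∃ Q' α : R, Q = r * Q' ∧ P.map (algebraMap k R) = C Q' * X + C α ∧
      P.degree ≤ 1 ∧ Q' = algebraMap k R (P.coeff 1) ∧ α = algebraMap k R (P.coeff 0) := by
  have hP : P.natDegree ≤ 1 := natDegree_le_one_of_map_comp_X_add_C_eq_add_C hr h
  have hlin := eq_X_add_C_of_natDegree_le_one
    ((natDegree_map_le (f := algebraMap k R) (p := P)).trans hP)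
  rw [coeff_map, coeff_map] at hlin
  rw [hlin, C_mul_X_add_C_comp_X_add_C, add_right_inj] at h
  exact ⟨_, _, (C_injective h).symm.trans (mul_comm _ _), hlin,
    natDegree_le_iff_degree_le.mp hP, rfl, rfl⟩
end

section
/- Let k be an algebraically closed field of characteristic 0, let n ≥ 1 and 0 ≤ r ≤ n−1. Let λ_0 = 1, let λ_1, …, λ_r ∈ k be roots of unity, and let λ_{r+1}, …, λ_n ∈ k be nonzero and multiplicatively independent. Let σ be the k-algebra automorphism of the polynomial ring k[x_0, …, x_n] determined by σ(x_i) = λ_i·x_i for all 0 ≤ i ≤ n. Fix d ≥ 0 and let W be a k-linear subspace of the space of homogeneous polynomials of degree d in k[x_0, …, x_n] such that σ(W) ⊆ W. Then there exist finitely many polynomials P_1, …, P_m ∈ k[x_0, …, x_r] (polynomials involving only the variables x_0, …, x_r) and monomials Q_1, …, Q_m in the variables x_{r+1}, …, x_n such that W is the k-linear span of P_1·Q_1, …, P_m·Q_m. -/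
/-!
Weight a monomial `x^a` by `∏ λ_i ^ a_i ∈ k`. Since `σ` multiplies the weight-`m` component
of a polynomial by `m`, Lagrange interpolation in `σ` shows that every weight component of an
element of `W` lies in `W`. Two monomials of equal weight have the same exponents on
`x_{r+1}, …, x_n`: raising to a common order `N` of the roots of unity `λ_1, …, λ_r` removes the
other variables, and multiplicative independence of `λ_{r+1}, …, λ_n` does the rest. So each weight
component is `P · x^t` with `P` in `x_0, …, x_r`, and the weight components of a finite spanning
set of `W` span `W`.
-/

open MvPolynomial

theorem Module.End.mem_invtSubmodule_aeval {K V : Type*} [CommSemiring K] [AddCommMonoid V]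
    [Module K V] {f : Module.End K V} {p : Submodule K V} (hp : p ∈ f.invtSubmodule)
    (q : Polynomial K) : p ∈ (Polynomial.aeval f q).invtSubmodule := by
  induction q using Polynomial.induction_on' with
  | add q₁ q₂ h₁ h₂ =>
    intro x hx
    rw [Submodule.mem_comap, map_add, LinearMap.add_apply]
    exact p.add_mem (h₁ hx) (h₂ hx)
  | monomial m a =>
    intro x hx
    rw [Submodule.mem_comap, Polynomial.aeval_monomial, Module.End.mul_apply,
      Module.algebraMap_end_apply, Module.End.pow_apply]
    exact p.smul_mem a (Set.MapsTo.iterate hp m hx)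

theorem Module.End.mem_of_sum_mem_of_apply_eq_smul {K V ι : Type*} [Field K] [AddCommGroup V]
    [Module K V] [DecidableEq ι] {f : Module.End K V} {p : Submodule K V}
    (hp : p ∈ f.invtSubmodule) {s : Finset ι} {c : ι → K} (hc : Set.InjOn c s) {v : ι → V}
    (hv : ∀ i ∈ s, f (v i) = c i • v i) (hsum : ∑ i ∈ s, v i ∈ p) {i : ι} (hi : i ∈ s) :
    v i ∈ p := by
  have hproj : Polynomial.aeval f (Lagrange.basis s c i) (∑ j ∈ s, v j) = v i := by
    rw [map_sum, Finset.sum_eq_single_of_mem i hi]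
    · rw [aeval_apply_of_mem_apply_eq_smul (hv i hi), Lagrange.eval_basis_self hc hi, one_smul]
    · intro j hj hji
      rw [aeval_apply_of_mem_apply_eq_smul (hv j hj), Lagrange.eval_basis_of_ne (Ne.symm hji) hj,
        zero_smul]
  exact hproj ▸ mem_invtSubmodule_aeval hp _ hsum

theorem exists_pow_eq_one_of_isOfFinOrder {ι M : Type*} [Finite ι] [Monoid M] {f : ι → M}
    (h : ∀ i, IsOfFinOrder (f i)) : ∃ N ≠ 0, ∀ i, f i ^ N = 1 := by
  cases nonempty_fintype ι
  exact ⟨∏ i, orderOf (f i), Finset.prod_ne_zero_iff.mpr fun i _ => (h i).orderOf_pos.ne',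
    fun i => orderOf_dvd_iff_pow_eq_one.mp (Finset.dvd_prod_of_mem _ (Finset.mem_univ i))⟩

theorem eq_of_prod_pow_eq_prod_pow {k ι : Type*} [Field k] [Fintype ι] {p : ι → Prop}
    [DecidablePred p] {lam : ι → k} {N : ℕ} (hN : N ≠ 0) (htors : ∀ i, ¬ p i → lam i ^ N = 1)
    (hne : ∀ i, p i → lam i ≠ 0)
    (hindep : ∀ c : ι → ℤ, ∏ i ∈ Finset.univ.filter p, lam i ^ c i = 1 → ∀ i, p i → c i = 0)
    {a b : ι →₀ ℕ} (hab : (a.prod fun i e => lam i ^ e) = b.prod fun i e => lam i ^ e) :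
    ∀ i, p i → a i = b i := by
  have hpow : ∀ c : ι →₀ ℕ,
      (c.prod fun i e => lam i ^ e) ^ N = ∏ i ∈ Finset.univ.filter p, lam i ^ (N * c i) := by
    intro c
    rw [Finsupp.prod_fintype _ _ fun _ => pow_zero _, ← Finset.prod_pow,
      ← Finset.prod_filter_of_ne (p := p)]
    · exact Finset.prod_congr rfl fun i _ => by rw [← pow_mul, mul_comm]
    · intro i _ hi
      by_contra hpi
      exact hi (by rw [← pow_mul, mul_comm, pow_mul, htors i hpi, one_pow])
  have hne' : ∀ i ∈ Finset.univ.filter p, lam i ≠ 0 := fun i hi =>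
    hne i (Finset.mem_filter.mp hi).2
  have hprod : ∏ i ∈ Finset.univ.filter p, lam i ^ ((N * a i : ℕ) - (N * b i : ℕ) : ℤ) = 1 :=
    calc _ = (∏ i ∈ Finset.univ.filter p, lam i ^ (N * a i)) /
          ∏ i ∈ Finset.univ.filter p, lam i ^ (N * b i) := by
          rw [← Finset.prod_div_distrib]
          exact Finset.prod_congr rfl fun i hi => by
            rw [zpow_sub₀ (hne' i hi), zpow_natCast, zpow_natCast]
      _ = 1 := by
        rw [← hpow a, ← hpow b, hab]
        refine div_self ?_
        rw [hpow b]
        exact Finset.prod_ne_zero_iff.mpr fun i hi => pow_ne_zero _ (hne' i hi)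
  intro i hi
  have hdiff := hindep _ hprod i hi
  exact Nat.eq_of_mul_eq_mul_left (Nat.pos_of_ne_zero hN) (by omega)

namespace MvPolynomial

variable {ι R : Type*}

theorem fg_of_le_homogeneousSubmodule [Finite ι] [CommRing R] [IsNoetherianRing R]
    {W : Submodule R (MvPolynomial ι R)} {d : ℕ} (h : W ≤ homogeneousSubmodule ι R d) : W.FG :=
  Submodule.FG.of_le_of_isNoetherian (T := restrictTotalDegree ι R d) fun _ hp =>
    (mem_restrictTotalDegree _ _ _).mpr ((mem_homogeneousSubmodule _ _).mp (h hp)).totalDegree_le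

variable [CommSemiring R]

theorem divMonomial_mul_monomial_of_forall_le {φ : MvPolynomial ι R} {t : ι →₀ ℕ}
    (h : ∀ a ∈ φ.support, t ≤ a) : φ.divMonomial t * monomial t 1 = φ := by
  ext s
  rw [coeff_mul_monomial']
  split_ifs with hts
  · rw [coeff_divMonomial, mul_one, add_tsub_cancel_of_le hts]
  · exact (notMem_support_iff.mp fun hs => hts (h s hs)).symm

theorem sum_weightedHomogeneousComponent_image {M : Type*} [AddCommMonoid M] [DecidableEq M]
    (w : ι → M) (φ : MvPolynomial ι R) :
    ∑ m ∈ φ.support.image (Finsupp.weight w), weightedHomogeneousComponent w m φ = φ := by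
  rw [← finsum_eq_sum_of_support_subset _ fun m hm => by_contra fun h =>
    hm (weightedHomogeneousComponent_eq_zero_of_notMem w φ m h)]
  exact sum_weightedHomogeneousComponent w φ

theorem algHom_monomial_of_apply_X_eq_smul {lam : ι → R}
    {σ : MvPolynomial ι R →ₐ[R] MvPolynomial ι R} (hσ : ∀ i, σ (X i) = lam i • X i)
    (a : ι →₀ ℕ) (c : R) : σ (monomial a c) = (a.prod fun i e => lam i ^ e) • monomial a c := by
  have hX : ∀ i e, σ (X i ^ e) = C (lam i ^ e) * X i ^ e := fun i e => by
    rw [map_pow, hσ, smul_pow, smul_eq_C_mul]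
  rw [monomial_eq, map_mul, algHom_C, map_finsuppProd, smul_eq_C_mul, map_finsuppProd]
  simp only [hX, Finsupp.prod_mul, algebraMap_eq]
  ring

theorem IsWeightedHomogeneous.algHom_apply_eq_smul {lam : ι → R}
    {σ : MvPolynomial ι R →ₐ[R] MvPolynomial ι R} (hσ : ∀ i, σ (X i) = lam i • X i)
    {φ : MvPolynomial ι R} {m : Additive R}
    (hφ : IsWeightedHomogeneous (fun i => Additive.ofMul (lam i)) φ m) :
    σ φ = m.toMul • φ := by
  conv_lhs => rw [← support_sum_monomial_coeff φ]
  rw [map_sum]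
  conv_rhs => rw [← support_sum_monomial_coeff φ, Finset.smul_sum]
  refine Finset.sum_congr rfl fun a ha => ?_
  rw [algHom_monomial_of_apply_X_eq_smul hσ, ← hφ (mem_support_iff.mp ha)]
  -- `(weight w a).toMul` unfolds to `a.prod fun i e => lam i ^ e`
  rfl

theorem weightedHomogeneousComponent_mem_of_apply_X_eq_smul {K : Type*} [Field K] {lam : ι → K}
    {σ : MvPolynomial ι K →ₐ[K] MvPolynomial ι K} (hσ : ∀ i, σ (X i) = lam i • X i)
    {W : Submodule K (MvPolynomial ι K)} (hW : ∀ p ∈ W, σ p ∈ W) {g : MvPolynomial ι K}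
    (hg : g ∈ W) (m : Additive K) :
    weightedHomogeneousComponent (fun i => Additive.ofMul (lam i)) m g ∈ W := by
  classical
  by_cases hm : m ∈ g.support.image (Finsupp.weight fun i => Additive.ofMul (lam i))
  · refine Module.End.mem_of_sum_mem_of_apply_eq_smul (f := σ.toLinearMap) hW
      (v := fun m => weightedHomogeneousComponent _ m g)
      Additive.toMul.injective.injOn (fun m _ => ?_) ?_ hm
    · exact (weightedHomogeneousComponent_isWeightedHomogeneous m g).algHom_apply_eq_smul hσ
    · rwa [sum_weightedHomogeneousComponent_image]
  · rw [weightedHomogeneousComponent_eq_zero_of_notMem _ _ _ hm]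
    exact W.zero_mem

theorem IsWeightedHomogeneous.exists_eq_mul_monomial {M : Type*} [AddCommMonoid M]
    (p : ι → Prop) {w : ι → M}
    (hw : ∀ a b : ι →₀ ℕ, Finsupp.weight w a = Finsupp.weight w b → ∀ i, p i → a i = b i)
    {φ : MvPolynomial ι R} {m : M} (hφ : IsWeightedHomogeneous w φ m) :
    ∃ (P : MvPolynomial ι R) (t : ι →₀ ℕ),
      (∀ j ∈ P.vars, ¬ p j) ∧ (∀ j, t j ≠ 0 → p j) ∧ φ = P * monomial t 1 := by
  classical
  obtain h | ⟨a₀, ha₀⟩ := φ.support.eq_empty_or_nonempty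
  · exact ⟨0, 0, by simp, by simp, by simp [support_eq_empty.mp h]⟩
  have hagree : ∀ a ∈ φ.support, ∀ i, p i → a i = a₀.filter p i := fun a ha i hi => by
    rw [Finsupp.filter_apply_pos _ _ hi]
    exact hw a a₀ ((hφ (mem_support_iff.mp ha)).trans (hφ (mem_support_iff.mp ha₀)).symm) i hi
  refine ⟨φ.divMonomial (a₀.filter p), a₀.filter p, fun j hj hpj => ?_, fun j hj => ?_, ?_⟩
  · obtain ⟨s, hs, hjs⟩ := (mem_vars_iff_mem_support j).mp hj
    have hts := hagree _ (mem_support_iff.mpr (by rwa [← coeff_divMonomial, ← mem_support_iff]))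
      j hpj
    simp only [Finsupp.add_apply] at hts
    exact (Finsupp.mem_support_iff.mp hjs) (by omega)
  · by_contra hpj
    exact hj (Finsupp.filter_apply_neg _ _ hpj)
  · refine (divMonomial_mul_monomial_of_forall_le fun a ha i => ?_).symm
    by_cases hpi : p i
    · exact (hagree a ha i hpi).ge
    · simp [Finsupp.filter_apply_neg _ _ hpi]

theorem exists_finset_span_eq_mul_monomial {K : Type*} [Field K] (p : ι → Prop) {lam : ι → K}
    (hlam : ∀ a b : ι →₀ ℕ, (a.prod fun i e => lam i ^ e) = (b.prod fun i e => lam i ^ e) →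
      ∀ i, p i → a i = b i)
    {σ : MvPolynomial ι K →ₐ[K] MvPolynomial ι K} (hσ : ∀ i, σ (X i) = lam i • X i)
    {W : Submodule K (MvPolynomial ι K)} (hWfg : W.FG) (hW : ∀ φ ∈ W, σ φ ∈ W) :
    ∃ s : Finset (MvPolynomial ι K), W = Submodule.span K s ∧
      ∀ x ∈ s, ∃ (P : MvPolynomial ι K) (t : ι →₀ ℕ),
        (∀ j ∈ P.vars, ¬ p j) ∧ (∀ j, t j ≠ 0 → p j) ∧ x = P * monomial t 1 := by
  classical
  set w : ι → Additive K := fun i => Additive.ofMul (lam i)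
  obtain ⟨G, rfl⟩ := hWfg
  refine ⟨G.biUnion fun g => (g.support.image (Finsupp.weight w)).image fun m =>
    weightedHomogeneousComponent w m g, le_antisymm ?_ ?_, ?_⟩
  · refine Submodule.span_le.mpr fun g hg => ?_
    rw [SetLike.mem_coe, ← sum_weightedHomogeneousComponent_image w g]
    exact Submodule.sum_mem _ fun m hm => Submodule.subset_span <| Finset.mem_coe.mpr <|
      Finset.mem_biUnion.mpr ⟨g, hg, Finset.mem_image_of_mem _ hm⟩
  · refine Submodule.span_le.mpr fun x hx => ?_
    obtain ⟨g, hg, hx⟩ := Finset.mem_biUnion.mp (Finset.mem_coe.mp hx)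
    obtain ⟨m, -, rfl⟩ := Finset.mem_image.mp hx
    exact weightedHomogeneousComponent_mem_of_apply_X_eq_smul hσ hW
      (Submodule.subset_span hg) m
  · intro x hx
    simp only [Finset.mem_biUnion, Finset.mem_image] at hx
    obtain ⟨g, -, m, -, rfl⟩ := hx
    exact (weightedHomogeneousComponent_isWeightedHomogeneous m g).exists_eq_mul_monomial p
      fun a b h => hlam a b (congrArg Additive.toMul h)

end MvPolynomial

theorem statement1_general {k : Type*} [Field k]
    (n r : ℕ)
    (lam : Fin (n + 1) → k) (hlam0 : lam 0 = 1)
    (hroots : ∀ i : Fin (n + 1), 1 ≤ (i : ℕ) → (i : ℕ) ≤ r → ∃ N : ℕ, 1 ≤ N ∧ lam i ^ N = 1)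
    (hne : ∀ i : Fin (n + 1), r < (i : ℕ) → lam i ≠ 0)
    (hindep : ∀ c : Fin (n + 1) → ℤ,
      (∏ i ∈ Finset.univ.filter (fun i : Fin (n + 1) => r < (i : ℕ)), lam i ^ c i) = 1 →
      ∀ i : Fin (n + 1), r < (i : ℕ) → c i = 0)
    (σ : MvPolynomial (Fin (n + 1)) k →ₐ[k] MvPolynomial (Fin (n + 1)) k)
    (hσ : ∀ i : Fin (n + 1), σ (X i) = lam i • X i)
    (d : ℕ) (W : Submodule k (MvPolynomial (Fin (n + 1)) k))
    (hWd : W ≤ homogeneousSubmodule (Fin (n + 1)) k d)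
    (hWinv : ∀ p ∈ W, σ p ∈ W) :
    ∃ (m : ℕ) (P Q : Fin m → MvPolynomial (Fin (n + 1)) k),
      (∀ i, ∀ j ∈ (P i).vars, (j : ℕ) ≤ r) ∧
      (∀ i, ∃ a : Fin (n + 1) →₀ ℕ,
        (∀ j : Fin (n + 1), a j ≠ 0 → r < (j : ℕ)) ∧ Q i = monomial a 1) ∧
      W = Submodule.span k (Set.range fun i => P i * Q i) := by
  have hfin : ∀ i : {i : Fin (n + 1) // ¬ r < (i : ℕ)}, IsOfFinOrder (lam i) := by
    rintro ⟨i, hi⟩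
    rcases Nat.eq_zero_or_pos i with h0 | hpos
    · obtain rfl : i = 0 := Fin.ext h0
      exact hlam0 ▸ IsOfFinOrder.one
    · obtain ⟨N, hN, hpow⟩ := hroots i hpos (not_lt.mp hi)
      exact isOfFinOrder_iff_pow_eq_one.mpr ⟨N, hN, hpow⟩
  obtain ⟨N, hN, htors⟩ := exists_pow_eq_one_of_isOfFinOrder hfin
  obtain ⟨s, hW, hs⟩ := exists_finset_span_eq_mul_monomial (fun i : Fin (n + 1) => r < (i : ℕ))
    (fun a b => eq_of_prod_pow_eq_prod_pow hN (fun i hi => htors ⟨i, hi⟩) hne hindep) hσ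
    (fg_of_le_homogeneousSubmodule hWd) hWinv
  obtain ⟨m, f, -, hf⟩ := s.finite_toSet.fin_param
  choose P a hP ha hPa using fun i => hs (f i) (Finset.mem_coe.mp (hf ▸ Set.mem_range_self i))
  refine ⟨m, P, fun i => monomial (a i) 1, fun i j hj => not_lt.mp (hP i j hj),
    fun i => ⟨a i, ha i, rfl⟩, ?_⟩
  rw [hW, ← hf]
  exact congrArg _ (congrArg Set.range (funext hPa))

/-- Lemma 2.3 of the paper.
Let `k` be algebraically closed of characteristic 0, `n ≥ 1`, `0 ≤ r ≤ n - 1`.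
Let `λ 0 = 1`, let `λ 1, …, λ r` be roots of unity and `λ (r+1), …, λ n` be nonzero and
multiplicatively independent.  Let `σ` be the `k`-algebra automorphism of
`k[x_0, …, x_n]` with `σ (x i) = λ i • x i`.  If `W` is a `σ`-invariant subspace of the
space of degree-`d` homogeneous polynomials, then `W` is spanned by finitely many
products `P i * Q i` where each `P i` involves only `x_0, …, x_r` and each `Q i` is a
monomial in `x_(r+1), …, x_n`. -/
theorem statement1 {k : Type*} [Field k] [CharZero k] [IsAlgClosed k]
    (n r : ℕ) (hn : 1 ≤ n) (hr : r ≤ n - 1)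
    (lam : Fin (n + 1) → k) (hlam0 : lam 0 = 1)
    (hroots : ∀ i : Fin (n + 1), 1 ≤ (i : ℕ) → (i : ℕ) ≤ r → ∃ N : ℕ, 1 ≤ N ∧ lam i ^ N = 1)
    (hne : ∀ i : Fin (n + 1), r < (i : ℕ) → lam i ≠ 0)
    (hindep : ∀ c : Fin (n + 1) → ℤ,
      (∏ i ∈ Finset.univ.filter (fun i : Fin (n + 1) => r < (i : ℕ)), lam i ^ c i) = 1 →
      ∀ i : Fin (n + 1), r < (i : ℕ) → c i = 0)
    (σ : MvPolynomial (Fin (n + 1)) k →ₐ[k] MvPolynomial (Fin (n + 1)) k)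
    (hσ : ∀ i : Fin (n + 1), σ (X i) = lam i • X i)
    (d : ℕ) (W : Submodule k (MvPolynomial (Fin (n + 1)) k))
    (hWd : W ≤ homogeneousSubmodule (Fin (n + 1)) k d)
    (hWinv : ∀ p ∈ W, σ p ∈ W) :
    ∃ (m : ℕ) (P Q : Fin m → MvPolynomial (Fin (n + 1)) k),
      (∀ i, ∀ j ∈ (P i).vars, (j : ℕ) ≤ r) ∧
      (∀ i, ∃ a : Fin (n + 1) →₀ ℕ,
        (∀ j : Fin (n + 1), a j ≠ 0 → r < (j : ℕ)) ∧ Q i = monomial a 1) ∧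
      W = Submodule.span k (Set.range fun i => P i * Q i) :=
  statement1_general n r lam hlam0 hroots hne hindep σ hσ d W hWd hWinv
end

section
/- Let k be an algebraically closed field of characteristic 0, let n ≥ 1 and 1 ≤ r ≤ n. Let μ_2, …, μ_r ∈ k be roots of unity and let μ_{r+1}, …, μ_n ∈ k be nonzero and multiplicatively independent. Let σ be the k-algebra automorphism of k[x_0, …, x_n] determined by σ(x_0) = x_0, σ(x_1) = x_1 + x_0, and σ(x_i) = μ_i·x_i for 2 ≤ i ≤ n. Suppose R ∈ k[x_0, …, x_n] is a nonzero polynomial and c ∈ k is such that σ(R) = c·R. Then there exist a polynomial P involving only the variables x_0, x_2, …, x_r and a monomial Q in the variables x_{r+1}, …, x_n such that R = P·Q; in particular R does not involve the variable x_1. -/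
/-!
Let `∂ = ∂/∂x₁`. Since `σ x₁ = x₁ + x₀` and `σ` rescales every other variable, `∂` commutes
with `σ`, so each `∂ʲ R` is again a `σ`-eigenvector for `c`. If `A` is such an eigenvector with
`∂² A = 0`, write `A = A₀ + x₁ B` with `A₀, B` free of `x₁`. On polynomials free of `x₁`, `σ` is
diagonal: with `σ xᵢ = νᵢ xᵢ` (`ν₀ = 1`), the monomial `x^b` has eigenvalue `ν^b = ∏ νᵢ^bᵢ`.
For `x^b` in the support of `B` this gives `ν^b = c ≠ 0`, and then the coefficient of `x₀ x^b`
in `σ A = c A` reads `c · B_b = 0`, whence `B = ∂ A = 0`. Descending from a power of `∂` that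
kills `R` gives `∂ R = 0`, so `R` is free of `x₁` and all its monomials have eigenvalue `c`. Raising to a common order of the roots of unity `μ₂, …, μ_r` and using the
independence of `μ_{r+1}, …, μ_n`, all monomials of `R` have the same exponents beyond `r`;
these form the monomial `Q`.
-/

open MvPolynomial

section

variable {k ι M : Type*}

def diagEigenvalue [CommMonoid M] (ν : ι → M) (a : ι →₀ ℕ) : M :=
  a.prod fun i e => ν i ^ e

lemma diagEigenvalue_add_single [CommMonoid M] (ν : ι → M) (a : ι →₀ ℕ) (i : ι) :
    diagEigenvalue ν (a + Finsupp.single i 1) = diagEigenvalue ν a * ν i := by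
  unfold diagEigenvalue
  rw [Finsupp.prod_add_index' (fun _ => pow_zero _) (fun _ _ _ => pow_add _ _ _)]
  simp

lemma diagEigenvalue_ne_zero [CommMonoidWithZero M] [Nontrivial M] [NoZeroDivisors M]
    {ν : ι → M} {a : ι →₀ ℕ} (h : ∀ i ∈ a.support, ν i ≠ 0) : diagEigenvalue ν a ≠ 0 :=
  Finsupp.prod_ne_zero_iff.mpr fun i hi => pow_ne_zero _ (h i hi)

section Shear

variable [CommRing k]

lemma pderiv_eq_zero_iff [IsDomain k] [CharZero k] {i : ι} {p : MvPolynomial ι k} :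
    pderiv i p = 0 ↔ i ∉ p.vars := by
  refine ⟨fun h hi => ?_, pderiv_eq_zero_of_notMem_vars⟩
  obtain ⟨m, hm, hmi⟩ := (mem_vars_iff_mem_support i).mp hi
  have hle : Finsupp.single i 1 ≤ m :=
    Finsupp.single_le_iff.mpr (Nat.one_le_iff_ne_zero.mpr (Finsupp.mem_support_iff.mp hmi))
  have := congrArg (coeff (m - Finsupp.single i 1)) h
  rw [coeff_pderiv, tsub_add_cancel_of_le hle, coeff_zero] at this
  exact mul_ne_zero (mem_support_iff.mp hm) (Nat.cast_add_one_ne_zero _) this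

lemma add_single_mem_support_of_coeff_iterate_pderiv_ne_zero {i : ι} {p : MvPolynomial ι k}
    {j : ℕ} {m : ι →₀ ℕ} (h : coeff m ((pderiv i)^[j] p) ≠ 0) :
    m + Finsupp.single i j ∈ p.support := by
  induction j generalizing m with
  | zero => simpa using h
  | succ j ih =>
    rw [Function.iterate_succ_apply', coeff_pderiv] at h
    simpa [add_assoc, ← Finsupp.single_add, add_comm 1 j] using ih (left_ne_zero_of_mul h)

lemma iterate_pderiv_degreeOf_succ (i : ι) (p : MvPolynomial ι k) :
    (pderiv i)^[p.degreeOf i + 1] p = 0 := by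
  ext m
  by_contra h
  have := monomial_le_degreeOf i (add_single_mem_support_of_coeff_iterate_pderiv_ne_zero h)
  simp only [Finsupp.add_apply, Finsupp.single_eq_same] at this
  omega

variable {i₀ i₁ : ι} {ν : ι → k} {σ : MvPolynomial ι k →ₐ[k] MvPolynomial ι k}

lemma map_monomial_of_eq_smul_X (hσ : ∀ i ≠ i₁, σ (X i) = ν i • X i) {a : ι →₀ ℕ}
    (ha : a i₁ = 0) (r : k) : σ (monomial a r) = monomial a (diagEigenvalue ν a * r) := by
  have hX : ∀ i ∈ a.support, σ (X i ^ a i) = C (ν i ^ a i) * X i ^ a i := by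
    intro i hi
    rw [map_pow, hσ i (by rintro rfl; simp_all), smul_eq_C_mul, mul_pow, map_pow]
  rw [monomial_eq, map_mul, algHom_C, map_finsuppProd, Finsupp.prod, Finset.prod_congr rfl hX,
    Finset.prod_mul_distrib, ← map_prod, ← mul_assoc, monomial_eq, C_mul, algebraMap_eq,
    mul_comm (C _) (C r)]
  rfl

lemma coeff_map_of_notMem_vars (hσ : ∀ i ≠ i₁, σ (X i) = ν i • X i) {p : MvPolynomial ι k}
    (hp : i₁ ∉ p.vars) (b : ι →₀ ℕ) : coeff b (σ p) = diagEigenvalue ν b * coeff b p := by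
  classical
  have hsupp : ∀ a ∈ p.support, a i₁ = 0 := fun a ha => by
    by_contra h
    exact hp ((mem_vars_iff_mem_support i₁).mpr ⟨a, ha, Finsupp.mem_support_iff.mpr h⟩)
  conv_lhs => rw [p.as_sum]
  rw [map_sum, coeff_sum, Finset.sum_congr rfl fun a ha => by
    rw [map_monomial_of_eq_smul_X hσ (hsupp a ha), coeff_monomial]]
  rw [Finset.sum_ite_eq']
  split_ifs with hb
  · rfl
  · rw [notMem_support_iff.mp hb, mul_zero]

lemma pderiv_map_eq_map_pderiv (h₀₁ : i₀ ≠ i₁) (hσ₁ : σ (X i₁) = X i₁ + X i₀)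
    (hσ : ∀ i ≠ i₁, σ (X i) = ν i • X i) (p : MvPolynomial ι k) :
    pderiv i₁ (σ p) = σ (pderiv i₁ p) := by
  induction p using MvPolynomial.induction_on with
  | C a => simp [algHom_C]
  | add p q hp hq => simp [hp, hq]
  | mul_X p i hp =>
    rw [map_mul, pderiv_mul, pderiv_mul, map_add, map_mul, map_mul, hp]
    by_cases hi : i = i₁
    · subst hi
      simp [hσ₁, pderiv_X_of_ne h₀₁]
    · simp [hσ i hi, pderiv_X_of_ne hi]

lemma diagEigenvalue_eq_of_map_eq_smul [IsDomain k] (hσ : ∀ i ≠ i₁, σ (X i) = ν i • X i)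
    {c : k} {p : MvPolynomial ι k} (hp₁ : i₁ ∉ p.vars) (hp : σ p = c • p)
    {a : ι →₀ ℕ} (ha : a ∈ p.support) : diagEigenvalue ν a = c := by
  have := congrArg (coeff a) hp
  rw [coeff_map_of_notMem_vars hσ hp₁, coeff_smul, smul_eq_mul] at this
  exact mul_right_cancel₀ (mem_support_iff.mp ha) this

variable [IsDomain k] [CharZero k]

lemma pderiv_eq_zero_of_map_eq_smul (h₀₁ : i₀ ≠ i₁) (hσ₁ : σ (X i₁) = X i₁ + X i₀)
    (hσ : ∀ i ≠ i₁, σ (X i) = ν i • X i) (hν₀ : ν i₀ = 1) (hν : ∀ i ≠ i₁, ν i ≠ 0)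
    {c : k} {A : MvPolynomial ι k} (hA : σ A = c • A) (hA₂ : pderiv i₁ (pderiv i₁ A) = 0) :
    pderiv i₁ A = 0 := by
  set B := pderiv i₁ A
  have hB : i₁ ∉ B.vars := pderiv_eq_zero_iff.mp hA₂
  have hσB : σ B = c • B := by
    rw [← pderiv_map_eq_map_pderiv h₀₁ hσ₁ hσ, hA, (pderiv i₁).map_smul]
  set A₀ := A - X i₁ * B
  have hA₀ : i₁ ∉ A₀.vars := pderiv_eq_zero_iff.mp (by simp [A₀, hA₂, B])
  have key : σ A₀ + X i₀ * (c • B) = c • A₀ := by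
    have h := hA
    rw [show A = A₀ + X i₁ * B from (sub_add_cancel A _).symm, map_add, map_mul, hσ₁, hσB] at h
    simp only [smul_eq_C_mul] at h ⊢
    linear_combination h
  by_contra hB0
  obtain ⟨b, hb⟩ := support_nonempty.mpr hB0
  have hweight : diagEigenvalue ν b = c := diagEigenvalue_eq_of_map_eq_smul hσ hB hσB hb
  have hc : c * coeff b B = 0 := by
    have := congrArg (coeff (b + Finsupp.single i₀ 1)) key
    rwa [coeff_add, coeff_map_of_notMem_vars hσ hA₀, diagEigenvalue_add_single, hν₀, mul_one,
      hweight, add_comm b, coeff_X_mul, coeff_smul, coeff_smul, smul_eq_mul, smul_eq_mul,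
      add_eq_left] at this
  refine diagEigenvalue_ne_zero (fun i hi => hν i ?_)
    (hweight.trans ((mul_eq_zero.mp hc).resolve_right (mem_support_iff.mp hb)))
  rintro rfl
  exact hB ((mem_vars_iff_mem_support _).mpr ⟨b, hb, hi⟩)

theorem notMem_vars_of_map_eq_smul (h₀₁ : i₀ ≠ i₁) (hσ₁ : σ (X i₁) = X i₁ + X i₀)
    (hσ : ∀ i ≠ i₁, σ (X i) = ν i • X i) (hν₀ : ν i₀ = 1) (hν : ∀ i ≠ i₁, ν i ≠ 0)
    {c : k} {R : MvPolynomial ι k} (hR : σ R = c • R) : i₁ ∉ R.vars := by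
  have hiter : ∀ j, σ ((pderiv i₁)^[j] R) = c • (pderiv i₁)^[j] R := by
    intro j
    induction j with
    | zero => exact hR
    | succ j ih =>
      rw [Function.iterate_succ_apply', ← pderiv_map_eq_map_pderiv h₀₁ hσ₁ hσ, ih,
        (pderiv i₁).map_smul]
  have hvanish : ∀ j ≤ R.degreeOf i₁, (pderiv i₁)^[j + 1] R = 0 := by
    intro j hj
    induction hj using Nat.decreasingInduction with
    | self => exact iterate_pderiv_degreeOf_succ _ _
    | of_succ j _ ih =>
      rw [Function.iterate_succ_apply', Function.iterate_succ_apply'] at ih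
      rw [Function.iterate_succ_apply']
      exact pderiv_eq_zero_of_map_eq_smul h₀₁ hσ₁ hσ hν₀ hν (hiter j) ih
  exact pderiv_eq_zero_iff.mp (hvanish 0 (Nat.zero_le _))

end Shear

section Independence

variable [CommGroupWithZero M] {μ : ι → M} {F : Finset ι}

lemma eq_of_prod_pow_eq_prod_pow_s3 (hμ : ∀ i ∈ F, μ i ≠ 0)
    (hindep : ∀ c : ι → ℤ, ∏ i ∈ F, μ i ^ c i = 1 → ∀ i ∈ F, c i = 0) {a b : ι → ℕ}
    (h : ∏ i ∈ F, μ i ^ a i = ∏ i ∈ F, μ i ^ b i) : ∀ i ∈ F, a i = b i := by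
  intro i hi
  suffices ∏ j ∈ F, μ j ^ ((a j : ℤ) - b j) = 1 by have := hindep _ this i hi; omega
  rw [Finset.prod_congr rfl fun j hj => zpow_sub₀ (hμ j hj) _ _, Finset.prod_div_distrib]
  simp only [zpow_natCast]
  rw [h]
  exact div_self (Finset.prod_ne_zero_iff.mpr fun j hj => pow_ne_zero _ (hμ j hj))

lemma eq_of_diagEigenvalue_eq [Fintype ι] (htors : ∀ i ∉ F, IsOfFinOrder (μ i))
    (hμ : ∀ i ∈ F, μ i ≠ 0) (hindep : ∀ c : ι → ℤ, ∏ i ∈ F, μ i ^ c i = 1 → ∀ i ∈ F, c i = 0)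
    {a b : ι →₀ ℕ} (h : diagEigenvalue μ a = diagEigenvalue μ b) : ∀ i ∈ F, a i = b i := by
  obtain ⟨N, hN, hpow⟩ := isOfFinOrder_iff_pow_eq_one.mp
    (IsOfFinOrder.pi fun i : {i // i ∉ F} => htors i i.2)
  have hpow' : ∀ i ∉ F, μ i ^ N = 1 := fun i hi => by simpa using congrFun hpow ⟨i, hi⟩
  have hpowN (d : ι →₀ ℕ) : diagEigenvalue μ d ^ N = ∏ i ∈ F, μ i ^ (N * d i) := by
    rw [diagEigenvalue, Finsupp.prod_fintype _ _ fun i => pow_zero _, ← Finset.prod_pow,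
      ← Finset.prod_subset (Finset.subset_univ F)]
    · exact Finset.prod_congr rfl fun i _ => by rw [← pow_mul, mul_comm]
    · intro i _ hi
      rw [← pow_mul, mul_comm, pow_mul, hpow' i hi, one_pow]
  intro i hi
  exact Nat.eq_of_mul_eq_mul_left hN
    (eq_of_prod_pow_eq_prod_pow_s3 (a := (N * a ·)) (b := (N * b ·)) hμ hindep
      (by rw [← hpowN a, ← hpowN b, h]) i hi)

end Independence

theorem exists_eq_mul_monomial_of_forall_eq [CommSemiring k] (p : ι → Prop) [DecidablePred p]
    (f : MvPolynomial ι k) (h : ∀ a ∈ f.support, ∀ b ∈ f.support, ∀ i, p i → a i = b i) :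
    ∃ (g : MvPolynomial ι k) (e : ι →₀ ℕ), (∀ j ∈ g.vars, j ∈ f.vars ∧ ¬ p j) ∧
      (∀ j, e j ≠ 0 → p j) ∧ f = g * monomial e 1 := by
  obtain ⟨e, hle, hagree, he⟩ : ∃ e : ι →₀ ℕ, (∀ a ∈ f.support, e ≤ a) ∧
      (∀ a ∈ f.support, ∀ i, p i → a i = e i) ∧ ∀ j, e j ≠ 0 → p j := by
    rcases f.support.eq_empty_or_nonempty with hf | ⟨a₀, ha₀⟩
    · exact ⟨0, by simp [hf]⟩
    refine ⟨a₀.filter p, fun a ha i => ?_, fun a ha i hi => ?_, fun j hj => ?_⟩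
    · rw [Finsupp.filter_apply]
      split_ifs with hi
      exacts [(h a₀ ha₀ a ha i hi).le, Nat.zero_le _]
    · rw [Finsupp.filter_apply_pos _ _ hi]
      exact h a ha a₀ ha₀ i hi
    · by_contra hj'
      exact hj (Finsupp.filter_apply_neg _ _ hj')
  refine ⟨f.divMonomial e, e, fun j hj => ?_, he, ?_⟩
  · obtain ⟨d, hd, hdj⟩ := (mem_vars_iff_mem_support j).mp hj
    rw [mem_support_iff, coeff_divMonomial] at hd
    have hde : e + d ∈ f.support := mem_support_iff.mpr hd
    have hdj' : d j ≠ 0 := Finsupp.mem_support_iff.mp hdj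
    refine ⟨(mem_vars_iff_mem_support j).mpr ⟨e + d, hde, ?_⟩, fun hpj => ?_⟩
    · simp [hdj']
    · have := hagree _ hde j hpj
      simp only [Finsupp.add_apply] at this
      omega
  · have hmod : f.modMonomial e = 0 := by
      ext s
      by_cases hs : e ≤ s
      · rw [coeff_modMonomial_of_le _ hs, coeff_zero]
      · rw [coeff_modMonomial_of_not_le _ hs, coeff_zero]
        exact notMem_support_iff.mp fun hsf => hs (hle s hsf)
    conv_lhs => rw [← divMonomial_add_modMonomial f e]
    rw [hmod, add_zero, mul_comm]

end

theorem statement3_general {k : Type*} [Field k] [CharZero k] [IsAlgClosed k]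
    (n r : ℕ) (hn : 1 ≤ n) (hr1 : 1 ≤ r)
    (mu : Fin (n + 1) → k)
    (hroots : ∀ i : Fin (n + 1), 2 ≤ (i : ℕ) → (i : ℕ) ≤ r → ∃ N : ℕ, 1 ≤ N ∧ mu i ^ N = 1)
    (hne : ∀ i : Fin (n + 1), r < (i : ℕ) → mu i ≠ 0)
    (hindep : ∀ c : Fin (n + 1) → ℤ,
      (∏ i ∈ Finset.univ.filter (fun i : Fin (n + 1) => r < (i : ℕ)), mu i ^ c i) = 1 →
      ∀ i : Fin (n + 1), r < (i : ℕ) → c i = 0)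
    (σ : MvPolynomial (Fin (n + 1)) k →ₐ[k] MvPolynomial (Fin (n + 1)) k)
    (hσ0 : σ (X 0) = X 0) (hσ1 : σ (X 1) = X 1 + X 0)
    (hσ : ∀ i : Fin (n + 1), 2 ≤ (i : ℕ) → σ (X i) = mu i • X i)
    (R : MvPolynomial (Fin (n + 1)) k)
    (c : k) (heig : σ R = c • R) :
    ∃ P Q : MvPolynomial (Fin (n + 1)) k,
      (∀ j ∈ P.vars, (j : ℕ) ≠ 1 ∧ (j : ℕ) ≤ r) ∧
      (∃ a : Fin (n + 1) →₀ ℕ,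
        (∀ j : Fin (n + 1), a j ≠ 0 → r < (j : ℕ)) ∧ Q = monomial a 1) ∧
      R = P * Q ∧ (1 : Fin (n + 1)) ∉ R.vars := by
  have hval1 : ((1 : Fin (n + 1)) : ℕ) = 1 := by
    rw [Fin.val_one', Nat.mod_eq_of_lt (by omega)]
  have h₀₁ : (0 : Fin (n + 1)) ≠ 1 := fun h => absurd (congrArg Fin.val h) (by rw [hval1]; simp)
  -- `ν 1` does not affect `σ`; it is set to `1` so that `ν i` is a root of unity for all `i ≤ r`.
  set ν : Fin (n + 1) → k := fun i => if (i : ℕ) ≤ 1 then 1 else mu i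
  have hσν : ∀ i ≠ 1, σ (X i) = ν i • X i := by
    intro i hi
    have hi' : (i : ℕ) ≠ 1 := fun h => hi (Fin.ext (h.trans hval1.symm))
    by_cases hi0 : (i : ℕ) = 0
    · simp [ν, show i = 0 from Fin.ext hi0, hσ0]
    · simp [ν, hσ i (by omega), show ¬ (i : ℕ) ≤ 1 by omega]
  have hνtors : ∀ i : Fin (n + 1), (i : ℕ) ≤ r → IsOfFinOrder (ν i) := by
    intro i hi
    by_cases hi1 : (i : ℕ) ≤ 1
    · simp [ν, hi1]
    · simp only [ν, hi1, if_false]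
      exact isOfFinOrder_iff_pow_eq_one.mpr (hroots i (by omega) hi)
  have hνF : ∀ i : Fin (n + 1), r < (i : ℕ) → ν i = mu i := fun i hi => if_neg (by omega)
  have hν0 : ∀ i ≠ 1, ν i ≠ 0 := by
    intro i _
    by_cases hir : (i : ℕ) ≤ r
    · exact (hνtors i hir).isUnit.ne_zero
    · rw [hνF i (by omega)]
      exact hne i (by omega)
  have hR₁ : (1 : Fin (n + 1)) ∉ R.vars :=
    notMem_vars_of_map_eq_smul h₀₁ hσ1 hσν (by simp [ν]) hν0 heig
  have hagree : ∀ a ∈ R.support, ∀ b ∈ R.support, ∀ i : Fin (n + 1), r < (i : ℕ) → a i = b i := by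
    intro a ha b hb i hi
    refine eq_of_diagEigenvalue_eq (F := Finset.univ.filter fun i : Fin (n + 1) => r < (i : ℕ))
      (fun j hj => hνtors j (by simpa using hj)) (fun j hj => ?_) (fun e he j hj => ?_)
      ((diagEigenvalue_eq_of_map_eq_smul hσν hR₁ heig ha).trans
        (diagEigenvalue_eq_of_map_eq_smul hσν hR₁ heig hb).symm) i (by simpa using hi)
    · rw [Finset.mem_filter_univ] at hj
      rw [hνF j hj]
      exact hne j hj
    · rw [Finset.mem_filter_univ] at hj
      refine hindep e ?_ j hj
      rwa [Finset.prod_congr rfl fun l hl => by rw [hνF l (by simpa using hl)]] at he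
  obtain ⟨P, a, hP, ha, hRP⟩ := exists_eq_mul_monomial_of_forall_eq _ R hagree
  refine ⟨P, monomial a 1, fun j hj => ?_, ⟨a, ha, rfl⟩, hRP, hR₁⟩
  obtain ⟨hjR, hjr⟩ := hP j hj
  exact ⟨fun h => hR₁ (Fin.ext (h.trans hval1.symm) ▸ hjR), by omega⟩

/-- one-dimensional case of Corollary 2.5 of the paper.
Let `k` be algebraically closed of characteristic 0, `n ≥ 1`, `1 ≤ r ≤ n`.
Let `μ 2, …, μ r` be roots of unity and `μ (r+1), …, μ n` be nonzero and multiplicatively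
independent.  Let `σ` be the `k`-algebra automorphism of `k[x_0, …, x_n]` with
`σ x_0 = x_0`, `σ x_1 = x_1 + x_0`, `σ x_i = μ i • x_i` for `2 ≤ i`.  If `R ≠ 0` and
`σ R = c • R` for some `c ∈ k`, then `R = P * Q` where `P` involves only the variables
`x_0, x_2, …, x_r` and `Q` is a monomial in `x_(r+1), …, x_n`; in particular `R` does not
involve `x_1`. -/
theorem statement3 {k : Type*} [Field k] [CharZero k] [IsAlgClosed k]
    (n r : ℕ) (hn : 1 ≤ n) (hr1 : 1 ≤ r) (hrn : r ≤ n)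
    (mu : Fin (n + 1) → k)
    (hroots : ∀ i : Fin (n + 1), 2 ≤ (i : ℕ) → (i : ℕ) ≤ r → ∃ N : ℕ, 1 ≤ N ∧ mu i ^ N = 1)
    (hne : ∀ i : Fin (n + 1), r < (i : ℕ) → mu i ≠ 0)
    (hindep : ∀ c : Fin (n + 1) → ℤ,
      (∏ i ∈ Finset.univ.filter (fun i : Fin (n + 1) => r < (i : ℕ)), mu i ^ c i) = 1 →
      ∀ i : Fin (n + 1), r < (i : ℕ) → c i = 0)
    (σ : MvPolynomial (Fin (n + 1)) k →ₐ[k] MvPolynomial (Fin (n + 1)) k)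
    (hσ0 : σ (X 0) = X 0) (hσ1 : σ (X 1) = X 1 + X 0)
    (hσ : ∀ i : Fin (n + 1), 2 ≤ (i : ℕ) → σ (X i) = mu i • X i)
    (R : MvPolynomial (Fin (n + 1)) k) (hR : R ≠ 0)
    (c : k) (heig : σ R = c • R) :
    ∃ P Q : MvPolynomial (Fin (n + 1)) k,
      (∀ j ∈ P.vars, (j : ℕ) ≠ 1 ∧ (j : ℕ) ≤ r) ∧
      (∃ a : Fin (n + 1) →₀ ℕ,
        (∀ j : Fin (n + 1), a j ≠ 0 → r < (j : ℕ)) ∧ Q = monomial a 1) ∧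
      R = P * Q ∧ (1 : Fin (n + 1)) ∉ R.vars :=
  statement3_general n r hn hr1 mu hroots hne hindep σ hσ0 hσ1 hσ R c heig
end

section
/- Let k be an algebraically closed field of characteristic 0, let n ≥ 1 and 0 ≤ r ≤ n−1. Let λ_0 = 1, let λ_1, …, λ_r ∈ k be roots of unity, and let λ_{r+1}, …, λ_n ∈ k be nonzero and multiplicatively independent. Let σ be the k-algebra automorphism of k[x_0, …, x_n] determined by σ(x_i) = λ_i·x_i for all i. Let I ⊆ k[x_0, …, x_n] be a homogeneous prime ideal such that σ(I) = I and x_i ∉ I for every 0 ≤ i ≤ n. Then I equals the radical of the ideal generated by I ∩ k[x_0, …, x_r], i.e., I is, up to radical, generated by polynomials involving only the variables x_0, …, x_r. -/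
/-!
Write `w(a) = ∏ λ_i ^ a_i` for the eigenvalue of `σ` on the monomial `x^a`. Since `I` is
`σ`-stable and `σ` is diagonal on monomials, the `w`-isotypic components of an element of `I`
lie in `I` again (apply to it the Lagrange polynomial in `σ` separating the finitely many
weights that occur). Inside one component all monomials have the same weight; raising to a
common order `N` of the roots of unity `λ_1, …, λ_r` and using multiplicative independence of
the remaining `λ_i` shows that they also have the same exponents at `x_{r+1}, …, x_n`. So the
component is a monomial in these variables times a polynomial in `x_0, …, x_r`, and primality
together with `x_i ∉ I` puts the second factor in `I`. Hence `I` is even generated by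
`I ∩ k[x_0, …, x_r]`.
-/

open MvPolynomial

theorem exists_pos_forall_pow_eq_one {ι M : Type*} [Monoid M] (s : Finset ι) {x : ι → M}
    (h : ∀ i ∈ s, IsOfFinOrder (x i)) : ∃ N, 0 < N ∧ ∀ i ∈ s, x i ^ N = 1 :=
  ⟨∏ i ∈ s, orderOf (x i), Finset.prod_pos fun i hi => (h i hi).orderOf_pos,
    fun _ hi => orderOf_dvd_iff_pow_eq_one.mp (Finset.dvd_prod_of_mem _ hi)⟩

theorem eq_of_prod_pow_eq_prod_pow_s4 {ι K : Type*} [Fintype ι] [CommGroupWithZero K]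
    (P : ι → Prop) [DecidablePred P] {lam : ι → K}
    (hfin : ∀ i, ¬P i → IsOfFinOrder (lam i)) (hne : ∀ i, P i → lam i ≠ 0)
    (hindep : ∀ c : ι → ℤ, ∏ i with P i, lam i ^ c i = 1 → ∀ i, P i → c i = 0)
    {a b : ι → ℕ} (h : ∏ i, lam i ^ a i = ∏ i, lam i ^ b i) (i : ι) (hi : P i) : a i = b i := by
  obtain ⟨N, hN, hpow⟩ :=
    exists_pos_forall_pow_eq_one {i | ¬P i} fun i hi => hfin i (Finset.mem_filter.mp hi).2
  -- raising to the power `N` kills the roots of unity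
  have hsplit : ∀ d : ι → ℕ, ∏ i with P i, lam i ^ (N * d i) = (∏ i, lam i ^ d i) ^ N := by
    intro d
    rw [← Finset.prod_pow, ← Finset.prod_filter_mul_prod_filter_not Finset.univ P,
      Finset.prod_eq_one (s := {i | ¬P i}), mul_one]
    · exact Finset.prod_congr rfl fun i _ => by rw [← pow_mul, mul_comm]
    · intro i hi
      rw [← pow_mul, mul_comm, pow_mul, hpow i hi, one_pow]
  have hprod_ne : ∏ i with P i, lam i ^ (N * b i) ≠ 0 :=
    Finset.prod_ne_zero_iff.mpr fun i hi => pow_ne_zero _ (hne i (Finset.mem_filter.mp hi).2)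
  have hc : ∏ i with P i, lam i ^ ((N * a i : ℕ) - (N * b i : ℕ) : ℤ) = 1 := by
    rw [Finset.prod_congr rfl fun i hi => zpow_sub₀ (hne i (Finset.mem_filter.mp hi).2) _ _]
    simp only [zpow_natCast]
    rw [Finset.prod_div_distrib, hsplit a, hsplit b, h, div_self (hsplit b ▸ hprod_ne)]
  have hci := hindep _ hc i hi
  rw [sub_eq_zero, Nat.cast_inj] at hci
  exact Nat.eq_of_mul_eq_mul_left hN hci

namespace MvPolynomial

theorem exists_eq_monomial_mul_of_forall_mem_support {ι R : Type*} [CommSemiring R]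
    (Q : ι → Prop) [DecidablePred Q] {p : MvPolynomial ι R} {b : ι →₀ ℕ}
    (h : ∀ a ∈ p.support, ∀ i, ¬Q i → a i = b i) :
    ∃ q : MvPolynomial ι R, (∀ j ∈ q.vars, Q j) ∧ p = monomial (b.filter (¬Q ·)) 1 * q := by
  classical
  refine ⟨∑ a ∈ p.support, monomial (a.filter Q) (coeff a p), fun j hj => ?_, ?_⟩
  · obtain ⟨a, ha, hja⟩ := Finset.mem_biUnion.mp (vars_sum_subset _ _ hj)
    rw [vars_monomial (mem_support_iff.mp ha), Finsupp.support_filter, Finset.mem_filter] at hja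
    exact hja.2
  · rw [Finset.mul_sum]
    conv_lhs => rw [p.as_sum]
    refine Finset.sum_congr rfl fun a ha => ?_
    have hfilter : b.filter (¬Q ·) = a.filter (¬Q ·) := by
      ext i
      by_cases hi : Q i
      · simp [hi]
      · simp [hi, h a ha i hi]
    rw [monomial_mul, one_mul, hfilter, add_comm, Finsupp.filter_add_filter_not]

theorem mem_of_monomial_mul_mem {ι R : Type*} [CommSemiring R] {I : Ideal (MvPolynomial ι R)}
    (hI : I.IsPrime) (hX : ∀ i, X i ∉ I) {a : ι →₀ ℕ} {q : MvPolynomial ι R}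
    (h : monomial a 1 * q ∈ I) : q ∈ I := by
  refine (hI.mem_or_mem h).resolve_left fun ha => ?_
  rw [monomial_eq, map_one, one_mul, Finsupp.prod] at ha
  obtain ⟨i, -, hi⟩ := hI.prod_mem_iff.mp ha
  exact hX i (hI.mem_of_pow_mem _ hi)

variable {ι k : Type*} [Fintype ι] [Field k] (lam : ι → k)

def monomialWeight (a : ι →₀ ℕ) : k := ∏ i, lam i ^ a i

variable {lam}

theorem coeff_apply_of_diagonal {σ : MvPolynomial ι k →ₐ[k] MvPolynomial ι k}
    (hσ : ∀ i, σ (X i) = lam i • X i) (f : MvPolynomial ι k) (a : ι →₀ ℕ) :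
    coeff a (σ f) = monomialWeight lam a * coeff a f := by
  classical
  induction f using MvPolynomial.induction_on' with
  | monomial b c =>
    have hmon : σ (monomial b c) = monomial b (monomialWeight lam b * c) := by
      simp only [monomial_eq, map_mul, algHom_C, algebraMap_eq,
        Finsupp.prod_fintype _ _ (fun _ => pow_zero _), map_prod, map_pow, hσ, smul_eq_C_mul,
        mul_pow, Finset.prod_mul_distrib]
      simp_rw [← C_pow]
      rw [← map_prod, monomialWeight]
      ring
    rw [hmon, coeff_monomial, coeff_monomial]
    split_ifs with h
    · rw [h]
    · rw [mul_zero]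
  | add p q hp hq => rw [map_add, coeff_add, coeff_add, hp, hq, mul_add]

theorem coeff_aeval_apply_of_diagonal {σ : MvPolynomial ι k →ₐ[k] MvPolynomial ι k}
    (hσ : ∀ i, σ (X i) = lam i • X i) (P : Polynomial k) (f : MvPolynomial ι k)
    (a : ι →₀ ℕ) :
    coeff a (Polynomial.aeval σ.toLinearMap P f) = P.eval (monomialWeight lam a) * coeff a f := by
  have hpow : ∀ m : ℕ, coeff a ((σ.toLinearMap ^ m) f) = monomialWeight lam a ^ m * coeff a f := by
    intro m
    induction m with
    | zero => simp
    | succ m ih =>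
      rw [pow_succ', Module.End.mul_apply, AlgHom.toLinearMap_apply,
        coeff_apply_of_diagonal hσ, ih, pow_succ']
      ring
  simp only [Polynomial.aeval_eq_sum_range, Polynomial.eval_eq_sum_range, LinearMap.sum_apply,
    LinearMap.smul_apply, coeff_sum, coeff_smul, hpow, smul_eq_mul, Finset.sum_mul, mul_assoc]

open scoped Classical in
variable (lam) in
noncomputable def weightComponent (μ : k) (f : MvPolynomial ι k) : MvPolynomial ι k :=
  ∑ a ∈ f.support with monomialWeight lam a = μ, monomial a (coeff a f)

open scoped Classical in
theorem coeff_weightComponent (μ : k) (f : MvPolynomial ι k) (b : ι →₀ ℕ) :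
    coeff b (weightComponent lam μ f) = if monomialWeight lam b = μ then coeff b f else 0 := by
  classical
  simp only [weightComponent, coeff_sum, coeff_monomial, Finset.sum_ite_eq', Finset.mem_filter,
    mem_support_iff]
  by_cases hb : coeff b f = 0 <;> simp [hb]

theorem monomialWeight_eq_of_mem_support_weightComponent {μ : k} {f : MvPolynomial ι k}
    {a : ι →₀ ℕ} (ha : a ∈ (weightComponent lam μ f).support) : monomialWeight lam a = μ := by
  classical
  rw [mem_support_iff, coeff_weightComponent] at ha
  by_contra h
  exact ha (if_neg h)

open scoped Classical in
theorem sum_weightComponent (f : MvPolynomial ι k) :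
    ∑ μ ∈ f.support.image (monomialWeight lam), weightComponent lam μ f = f :=
  (Finset.sum_fiberwise_of_maps_to (fun _ => Finset.mem_image_of_mem _) _).trans
    f.as_sum.symm

theorem weightComponent_mem_of_diagonal {σ : MvPolynomial ι k →ₐ[k] MvPolynomial ι k}
    (hσ : ∀ i, σ (X i) = lam i • X i) {I : Ideal (MvPolynomial ι k)} (hI : ∀ f ∈ I, σ f ∈ I)
    {f : MvPolynomial ι k} (hf : f ∈ I) (μ : k) : weightComponent lam μ f ∈ I := by
  classical
  set s := insert μ (f.support.image (monomialWeight lam))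
  have hproj :
      Polynomial.aeval σ.toLinearMap (Lagrange.basis s id μ) f = weightComponent lam μ f := by
    ext b
    rw [coeff_aeval_apply_of_diagonal hσ, coeff_weightComponent]
    by_cases hb : coeff b f = 0
    · simp [hb]
    split_ifs with hμ
    · have h1 : (Lagrange.basis s id μ).eval μ = 1 :=
        Lagrange.eval_basis_self (Set.injOn_id _) (Finset.mem_insert_self μ _)
      rw [hμ, h1, one_mul]
    · have h0 : (Lagrange.basis s id μ).eval (monomialWeight lam b) = 0 :=
        Lagrange.eval_basis_of_ne (v := id) (Ne.symm hμ)
          (Finset.mem_insert_of_mem (Finset.mem_image_of_mem _ (mem_support_iff.mpr hb)))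
      rw [h0, zero_mul]
  rw [← hproj]
  exact Polynomial.aeval_apply_smul_mem_of_le_comap (q := I.restrictScalars k) hf _ _ hI

theorem le_span_inter_of_diagonal (Q : ι → Prop) [DecidablePred Q]
    (hweight : ∀ a b : ι →₀ ℕ, monomialWeight lam a = monomialWeight lam b →
      ∀ i, ¬Q i → a i = b i)
    {σ : MvPolynomial ι k →ₐ[k] MvPolynomial ι k} (hσ : ∀ i, σ (X i) = lam i • X i)
    {I : Ideal (MvPolynomial ι k)} (hI : I.IsPrime) (hX : ∀ i, X i ∉ I)
    (hσI : ∀ f ∈ I, σ f ∈ I) :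
    I ≤ Ideal.span ((I : Set (MvPolynomial ι k)) ∩ {p | ∀ j ∈ p.vars, Q j}) := by
  intro f hf
  rw [← sum_weightComponent (lam := lam) f]
  refine Ideal.sum_mem _ fun μ _ => ?_
  have hg : weightComponent lam μ f ∈ I := weightComponent_mem_of_diagonal hσ hσI hf μ
  obtain hempty | ⟨b, hb⟩ := (weightComponent lam μ f).support.eq_empty_or_nonempty
  · rw [support_eq_empty.mp hempty]
    exact zero_mem _
  obtain ⟨q, hqvars, hgq⟩ := exists_eq_monomial_mul_of_forall_mem_support Q
    (p := weightComponent lam μ f) fun a ha =>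
    hweight a b (by rw [monomialWeight_eq_of_mem_support_weightComponent ha,
      monomialWeight_eq_of_mem_support_weightComponent hb])
  rw [hgq] at hg ⊢
  exact Ideal.mul_mem_left _ _ (Ideal.subset_span ⟨mem_of_monomial_mul_mem hI hX hg, hqvars⟩)

end MvPolynomial

theorem statement4_general {k : Type*} [Field k]
    (n r : ℕ)
    (lam : Fin (n + 1) → k) (hlam0 : lam 0 = 1)
    (hroots : ∀ i : Fin (n + 1), 1 ≤ (i : ℕ) → (i : ℕ) ≤ r → ∃ N : ℕ, 1 ≤ N ∧ lam i ^ N = 1)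
    (hne : ∀ i : Fin (n + 1), r < (i : ℕ) → lam i ≠ 0)
    (hindep : ∀ c : Fin (n + 1) → ℤ,
      (∏ i ∈ Finset.univ.filter (fun i : Fin (n + 1) => r < (i : ℕ)), lam i ^ c i) = 1 →
      ∀ i : Fin (n + 1), r < (i : ℕ) → c i = 0)
    (σ : MvPolynomial (Fin (n + 1)) k →ₐ[k] MvPolynomial (Fin (n + 1)) k)
    (hσ : ∀ i : Fin (n + 1), σ (X i) = lam i • X i)
    (I : Ideal (MvPolynomial (Fin (n + 1)) k)) (hprime : I.IsPrime)
    (hinv : I.map (σ : MvPolynomial (Fin (n + 1)) k →+* MvPolynomial (Fin (n + 1)) k) = I)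
    (hX : ∀ i : Fin (n + 1), X i ∉ I) :
    I = (Ideal.span ((I : Set (MvPolynomial (Fin (n + 1)) k)) ∩
          {p | ∀ j ∈ p.vars, (j : ℕ) ≤ r})).radical := by
  have hfin : ∀ i : Fin (n + 1), ¬r < (i : ℕ) → IsOfFinOrder (lam i) := by
    intro i hi
    rcases Nat.eq_zero_or_pos (i : ℕ) with h0 | h0
    · obtain rfl : i = 0 := Fin.ext (by simpa using h0)
      exact hlam0 ▸ IsOfFinOrder.one
    · obtain ⟨N, hN, hpow⟩ := hroots i h0 (not_lt.mp hi)
      exact isOfFinOrder_iff_pow_eq_one.mpr ⟨N, hN, hpow⟩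
  have hweight : ∀ a b : Fin (n + 1) →₀ ℕ, monomialWeight lam a = monomialWeight lam b →
      ∀ i : Fin (n + 1), ¬(i : ℕ) ≤ r → a i = b i := fun a b h i hi =>
    eq_of_prod_pow_eq_prod_pow_s4 _ hfin hne hindep h i (not_le.mp hi)
  have hσI : ∀ f ∈ I, σ f ∈ I := fun f hf => hinv ▸ Ideal.mem_map_of_mem _ hf
  refine le_antisymm ((le_span_inter_of_diagonal _ hweight hσ hprime hX hσI).trans
    Ideal.le_radical) ?_
  calc _ ≤ I.radical := Ideal.radical_mono (Ideal.span_le.mpr Set.inter_subset_left)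
    _ = I := hprime.radical

/-- ideal-theoretic form of Lemma 3.1(1) of the paper.
Let `k` be algebraically closed of characteristic 0, `n ≥ 1`, `0 ≤ r ≤ n - 1`.
Let `λ 0 = 1`, `λ 1, …, λ r` roots of unity, `λ (r+1), …, λ n` nonzero and
multiplicatively independent, and let `σ` be the `k`-algebra automorphism of
`k[x_0, …, x_n]` with `σ (x i) = λ i • x i`.  If `I` is a homogeneous prime ideal with
`σ(I) = I` and `x i ∉ I` for all `i`, then `I` equals the radical of the ideal generated
by its elements involving only the variables `x_0, …, x_r`. -/
theorem statement4 {k : Type*} [Field k] [CharZero k] [IsAlgClosed k]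
    (n r : ℕ) (hn : 1 ≤ n) (hr : r ≤ n - 1)
    (lam : Fin (n + 1) → k) (hlam0 : lam 0 = 1)
    (hroots : ∀ i : Fin (n + 1), 1 ≤ (i : ℕ) → (i : ℕ) ≤ r → ∃ N : ℕ, 1 ≤ N ∧ lam i ^ N = 1)
    (hne : ∀ i : Fin (n + 1), r < (i : ℕ) → lam i ≠ 0)
    (hindep : ∀ c : Fin (n + 1) → ℤ,
      (∏ i ∈ Finset.univ.filter (fun i : Fin (n + 1) => r < (i : ℕ)), lam i ^ c i) = 1 →
      ∀ i : Fin (n + 1), r < (i : ℕ) → c i = 0)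
    (σ : MvPolynomial (Fin (n + 1)) k →ₐ[k] MvPolynomial (Fin (n + 1)) k)
    (hσ : ∀ i : Fin (n + 1), σ (X i) = lam i • X i)
    (I : Ideal (MvPolynomial (Fin (n + 1)) k)) (hprime : I.IsPrime)
    (hhom : ∃ S : Set (MvPolynomial (Fin (n + 1)) k),
      (∀ p ∈ S, ∃ d : ℕ, p.IsHomogeneous d) ∧ I = Ideal.span S)
    (hinv : I.map (σ : MvPolynomial (Fin (n + 1)) k →+* MvPolynomial (Fin (n + 1)) k) = I)
    (hX : ∀ i : Fin (n + 1), X i ∉ I) :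
    I = (Ideal.span ((I : Set (MvPolynomial (Fin (n + 1)) k)) ∩
          {p | ∀ j ∈ p.vars, (j : ℕ) ≤ r})).radical :=
  statement4_general n r lam hlam0 hroots hne hindep σ hσ I hprime hinv hX
end

section
/- Let k be an algebraically closed field of characteristic 0, let n ≥ 1 and 1 ≤ r ≤ n. Let μ_2, …, μ_r ∈ k be roots of unity and let μ_{r+1}, …, μ_n ∈ k be nonzero and multiplicatively independent. Let σ be the k-algebra automorphism of k[x_0, …, x_n] determined by σ(x_0) = x_0, σ(x_1) = x_1 + x_0, and σ(x_i) = μ_i·x_i for 2 ≤ i ≤ n. Let I ⊆ k[x_0, …, x_n] be a homogeneous prime ideal such that σ(I) = I and x_i ∉ I for every 0 ≤ i ≤ n. Then I equals the radical of the ideal generated by I ∩ k[x_0, x_2, …, x_r], i.e., I is, up to radical, generated by polynomials involving only the variables x_0, x_2, …, x_r. -/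
/-!
Let `N > 0` with `μ i ^ N = 1` for `2 ≤ i ≤ r`, and `τ = σ ^ N`. Then `τ` fixes
`x_0, x_2, …, x_r`, shears `x_1 ↦ x_1 + N x_0` and scales `x_i` by `μ i ^ N` for `i > r`.
Write `f ∈ I` as `∑ c, x^c g_c` with `c` supported on the indices `> r` and
`g_c ∈ k[x_0, …, x_r]`. Each `x^c g_c` is a generalized eigenvector of `τ` for the eigenvalue
`∏ μ i ^ (N c_i)`, and these eigenvalues are pairwise distinct by multiplicative independence.
As `τ` preserves `I`, the generalized eigencomponents of an element of `I` lie in `I`, so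
`x^c g_c ∈ I`, hence `g_c ∈ I` since `I` is prime and contains no variable.

Finally `τ^t g_c = g_c(x_1 + t N x_0) ∈ I` for all `t`. In the domain `k[x] ⧸ I` this says
that `g_c` with `x_1` replaced by an indeterminate `T` vanishes at the infinitely many points
`x_1 + t N x_0`, so it is zero: every coefficient of `g_c` as a polynomial in `x_1` lies in `I`.
-/

open Module End

theorem Finset.exists_pos_pow_eq_one {ι M : Type*} [CommMonoid M] (s : Finset ι) {x : ι → M}
    (hx : ∀ i ∈ s, ∃ N, 0 < N ∧ x i ^ N = 1) : ∃ N, 0 < N ∧ ∀ i ∈ s, x i ^ N = 1 :=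
  ⟨∏ i ∈ s, orderOf (x i),
    Finset.prod_pos fun i hi => (isOfFinOrder_iff_pow_eq_one.mpr (hx i hi)).orderOf_pos,
    fun _ hi => orderOf_dvd_iff_pow_eq_one.mp (Finset.dvd_prod_of_mem _ hi)⟩

theorem Finset.eq_of_prod_pow_eq_prod_pow {ι K : Type*} [Field K] {s : Finset ι} {x : ι → K}
    (hx : ∀ i ∈ s, x i ≠ 0)
    (hindep : ∀ e : ι → ℤ, ∏ i ∈ s, x i ^ e i = 1 → ∀ i ∈ s, e i = 0) {e e' : ι → ℕ}
    (h : ∏ i ∈ s, x i ^ e i = ∏ i ∈ s, x i ^ e' i) : ∀ i ∈ s, e i = e' i := by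
  have hsub : ∀ i ∈ s, x i ^ ((e i : ℤ) - e' i) = x i ^ e i / x i ^ e' i := fun i hi => by
    rw [zpow_sub₀ (hx i hi), zpow_natCast, zpow_natCast]
  have hdiv : ∏ i ∈ s, x i ^ ((e i : ℤ) - e' i) = 1 := by
    rw [Finset.prod_congr rfl hsub, Finset.prod_div_distrib, h,
      div_self (Finset.prod_ne_zero_iff.mpr fun i hi => pow_ne_zero _ (hx i hi))]
  intro i hi
  have := hindep _ hdiv i hi
  omega

theorem Submodule.mem_of_sum_mem_of_mem_maxGenEigenspace {K V ι : Type*} [Field K]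
    [AddCommGroup V] [Module K V] {T : End K V} {p : Submodule K V} (hp : p ≤ p.comap T)
    {S : Finset ι} {Λ : ι → K} (hΛ : Set.InjOn Λ S) {v : ι → V}
    (hv : ∀ c ∈ S, v c ∈ T.maxGenEigenspace (Λ c)) (hsum : ∑ c ∈ S, v c ∈ p) :
    ∀ c ∈ S, v c ∈ p := by
  classical
  set T' : End K (V ⧸ p) := p.mapQ p T hp
  have hmkQ : ∀ μ x, x ∈ T.maxGenEigenspace μ → p.mkQ x ∈ T'.maxGenEigenspace μ := by
    intro μ x hx
    obtain ⟨m, hm⟩ := (T.mem_maxGenEigenspace μ x).mp hx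
    have hinv : p ≤ p.comap (T - μ • 1) := fun y hy => p.sub_mem (hp hy) (p.smul_mem μ hy)
    have hcomm : T' - μ • 1 = p.mapQ p (T - μ • 1) hinv := by
      ext; simp [T']
    refine (T'.mem_maxGenEigenspace μ _).mpr ⟨m, ?_⟩
    rw [hcomm, ← Submodule.mapQ_pow, Submodule.mkQ_apply, Submodule.mapQ_apply, hm]
    rfl
  intro c hc
  rw [← Submodule.Quotient.mk_eq_zero, ← Submodule.mkQ_apply]
  have hdisj := (independent_genEigenspace T' ⊤).disjoint_biSup
    (y := Λ '' ↑(S.erase c)) (x := Λ c) fun ⟨c', hc', he⟩ =>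
      (Finset.mem_erase.mp hc').1 (hΛ (Finset.mem_of_mem_erase hc') hc he)
  refine Submodule.disjoint_def.mp hdisj _ (hmkQ _ _ (hv c hc)) ?_
  have hzero : ∑ c' ∈ S, p.mkQ (v c') = 0 := by
    rw [← map_sum, Submodule.mkQ_apply, Submodule.Quotient.mk_eq_zero]
    exact hsum
  rw [← Finset.add_sum_erase S _ hc, add_eq_zero_iff_eq_neg] at hzero
  rw [hzero]
  refine Submodule.neg_mem _ (Submodule.sum_mem _ fun c' hc' => ?_)
  exact Submodule.mem_iSup_of_mem (Λ c') (Submodule.mem_iSup_of_mem ⟨c', hc', rfl⟩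
    (hmkQ _ _ (hv c' (Finset.mem_of_mem_erase hc'))))

theorem Ideal.le_comap_pow_of_le_comap {R A : Type*} [CommSemiring R] [Semiring A] [Algebra R A]
    {I : Ideal A} {f : A →ₐ[R] A} (h : I ≤ I.comap f) (m : ℕ) : I ≤ I.comap (f ^ m) := by
  induction m with
  | zero => exact fun x hx => hx
  | succ m ih =>
    rw [pow_succ']
    exact fun x hx => h (ih hx)

namespace AlgHom

variable {R A : Type*} [CommRing R] [CommRing A] [Algebra R A] (τ : A →ₐ[R] A)

theorem pow_apply_of_apply_eq_smul {x : A} {c : R} (h : τ x = c • x) (m : ℕ) :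
    (τ ^ m) x = c ^ m • x := by
  induction m with
  | zero => simp
  | succ m ih => rw [pow_succ', mul_apply, ih, map_smul, h, smul_smul, ← pow_succ]

theorem pow_apply_of_apply_eq_add {x y : A} (hx : τ x = x) (hy : τ y = y + x) (m : ℕ) :
    (τ ^ m) y = y + m • x := by
  induction m with
  | zero => simp
  | succ m ih => rw [pow_succ', mul_apply, ih, map_add, map_nsmul, hx, hy, succ_nsmul]; abel

theorem mem_maxGenEigenspace_of_apply_eq_smul {x : A} {c : R} (h : τ x = c • x) :
    x ∈ τ.toEnd.maxGenEigenspace c :=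
  (mem_maxGenEigenspace _ _ _).mpr ⟨1, by simp [h]⟩

theorem mem_maxGenEigenspace_one_of_apply_eq_add {x y : A} (hx : τ x = x) (hy : τ y = y + x) :
    y ∈ τ.toEnd.maxGenEigenspace 1 :=
  (mem_maxGenEigenspace _ _ _).mpr ⟨2, by simp [pow_two, hx, hy]⟩

theorem sub_smul_one_apply_mul (a b : R) (x y : A) :
    (τ.toEnd - (a * b) • 1) (x * y) =
      (τ.toEnd - a • 1) x * (τ.toEnd - b • 1) y
        + b • ((τ.toEnd - a • 1) x * y) + a • (x * (τ.toEnd - b • 1) y) := by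
  simp only [LinearMap.sub_apply, LinearMap.smul_apply, Module.End.one_apply, toEnd_apply,
    toLinearMap_apply, map_mul]
  simp only [Algebra.smul_def, map_mul]
  ring

theorem mul_mem_maxGenEigenspace {x y : A} {a b : R}
    (hx : x ∈ τ.toEnd.maxGenEigenspace a) (hy : y ∈ τ.toEnd.maxGenEigenspace b) :
    x * y ∈ τ.toEnd.maxGenEigenspace (a * b) := by
  obtain ⟨m, hm⟩ := (mem_maxGenEigenspace _ _ _).mp hx
  obtain ⟨n, hn⟩ := (mem_maxGenEigenspace _ _ _).mp hy
  refine (mem_maxGenEigenspace _ _ _).mpr ⟨m + n, ?_⟩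
  set δ : R → Module.End R A := fun c => τ.toEnd - c • 1
  suffices key : ∀ s m n x y, m + n ≤ s → (δ a ^ m) x = 0 → (δ b ^ n) y = 0 →
      (δ (a * b) ^ s) (x * y) = 0 from key _ m n x y le_rfl hm hn
  intro s
  induction s with
  | zero =>
    intro m n x y hmn hx _
    obtain rfl : m = 0 := by omega
    simp_all
  | succ s ih =>
    intro m n x y hmn hx hy
    match m, n with
    | 0, _ => simp_all
    | _, 0 => simp_all
    | m + 1, n + 1 =>
      rw [pow_succ, Module.End.mul_apply] at hx hy
      rw [pow_succ, Module.End.mul_apply, sub_smul_one_apply_mul, map_add, map_add, map_smul,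
        map_smul, ih m n _ _ (by omega) hx hy,
        ih m (n + 1) _ _ (by omega) hx (by rwa [pow_succ, Module.End.mul_apply]),
        ih (m + 1) n _ _ (by omega) (by rwa [pow_succ, Module.End.mul_apply]) hy]
      simp

theorem pow_mem_maxGenEigenspace {x : A} {c : R} (hx : x ∈ τ.toEnd.maxGenEigenspace c) (m : ℕ) :
    x ^ m ∈ τ.toEnd.maxGenEigenspace (c ^ m) := by
  induction m with
  | zero => exact τ.mem_maxGenEigenspace_of_apply_eq_smul (by simp)
  | succ m ih => rw [pow_succ, pow_succ]; exact τ.mul_mem_maxGenEigenspace ih hx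

theorem prod_mem_maxGenEigenspace {ι : Type*} (s : Finset ι) {x : ι → A} {c : ι → R}
    (hx : ∀ i ∈ s, x i ∈ τ.toEnd.maxGenEigenspace (c i)) :
    ∏ i ∈ s, x i ∈ τ.toEnd.maxGenEigenspace (∏ i ∈ s, c i) := by
  classical
  induction s using Finset.induction_on with
  | empty => exact τ.mem_maxGenEigenspace_of_apply_eq_smul (by simp)
  | insert i s hi ih =>
    rw [Finset.prod_insert hi, Finset.prod_insert hi]
    exact τ.mul_mem_maxGenEigenspace (hx i (Finset.mem_insert_self i s))
      (ih fun j hj => hx j (Finset.mem_insert_of_mem hj))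

end AlgHom

namespace MvPolynomial

variable {R σ : Type*}

theorem aeval_eq_aeval_of_vars [CommSemiring R] {S : Type*} [CommSemiring S] [Algebra R S]
    {g₁ g₂ : σ → S} {f : MvPolynomial σ R} (h : ∀ i ∈ f.vars, g₁ i = g₂ i) :
    aeval g₁ f = aeval g₂ f :=
  eval₂Hom_congr' rfl (fun i hi _ => h i hi) rfl

section Eigen

variable [CommRing R] (τ : MvPolynomial σ R →ₐ[R] MvPolynomial σ R) {ev : σ → R}

theorem monomial_mem_maxGenEigenspace (hX : ∀ i, X i ∈ τ.toEnd.maxGenEigenspace (ev i))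
    (d : σ →₀ ℕ) (a : R) :
    monomial d a ∈ τ.toEnd.maxGenEigenspace (d.prod fun i e => ev i ^ e) := by
  rw [← mul_one a, ← smul_eq_mul, ← smul_monomial, ← prod_X_pow_eq_monomial]
  exact Submodule.smul_mem _ _
    (τ.prod_mem_maxGenEigenspace _ fun i _ => τ.pow_mem_maxGenEigenspace (hX i) _)

theorem mem_maxGenEigenspace_one_of_vars (hX : ∀ i, X i ∈ τ.toEnd.maxGenEigenspace (ev i))
    {f : MvPolynomial σ R} (hf : ∀ i ∈ f.vars, ev i = 1) :
    f ∈ τ.toEnd.maxGenEigenspace 1 := by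
  rw [f.as_sum]
  refine Submodule.sum_mem _ fun d hd => ?_
  convert monomial_mem_maxGenEigenspace τ hX d (coeff d f)
  refine (Finset.prod_eq_one fun i hi => ?_).symm
  simp only [hf i ((mem_vars_iff_mem_support i).mpr ⟨d, hd, hi⟩), one_pow]

end Eigen

variable [DecidableEq σ]

section PartialCoeff

variable [CommSemiring R] (p : σ → Prop) [DecidablePred p]

noncomputable def partialSupport (f : MvPolynomial σ R) : Finset (σ →₀ ℕ) :=
  f.support.image (·.filter p)

/-- The coefficient of `X ^ c` in `f`, viewed as a polynomial in the variables satisfying `p`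
with coefficients polynomials in the other variables. -/
noncomputable def partialCoeff (c : σ →₀ ℕ) (f : MvPolynomial σ R) : MvPolynomial σ R :=
  ∑ d ∈ f.support with d.filter p = c, monomial (d.filter (¬ p ·)) (coeff d f)

variable {p}

theorem of_mem_support_of_mem_partialSupport {f : MvPolynomial σ R} {c : σ →₀ ℕ}
    (hc : c ∈ partialSupport p f) {i : σ} (hi : i ∈ c.support) : p i := by
  obtain ⟨d, -, rfl⟩ := Finset.mem_image.mp hc
  exact (Finset.mem_filter.mp (Finsupp.support_filter p d ▸ hi)).2

theorem of_mem_vars_partialCoeff {c : σ →₀ ℕ} {f : MvPolynomial σ R} {i : σ}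
    (hi : i ∈ (partialCoeff p c f).vars) : ¬ p i ∧ i ∈ f.vars := by
  obtain ⟨d', hd', hid'⟩ := (mem_vars_iff_mem_support i).mp hi
  obtain ⟨d, hd, hd'd⟩ := Finset.mem_biUnion.mp (support_sum hd')
  rw [Finset.mem_singleton.mp (support_monomial_subset hd'd), Finsupp.support_filter,
    Finset.mem_filter] at hid'
  exact ⟨hid'.2, (mem_vars_iff_mem_support i).mpr ⟨d, (Finset.mem_filter.mp hd).1, hid'.1⟩⟩

variable (p)

theorem sum_monomial_mul_partialCoeff (f : MvPolynomial σ R) :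
    ∑ c ∈ partialSupport p f, monomial c 1 * partialCoeff p c f = f := by
  conv_rhs => rw [f.as_sum, ← Finset.sum_fiberwise_of_maps_to
    (fun d hd => Finset.mem_image_of_mem (·.filter p) hd)]
  refine Finset.sum_congr rfl fun c _ => ?_
  rw [partialCoeff, Finset.mul_sum]
  refine Finset.sum_congr rfl fun d hd => ?_
  rw [monomial_mul, one_mul, ← (Finset.mem_filter.mp hd).2, Finsupp.filter_add_filter_not]

end PartialCoeff

section Shear

variable [CommRing R] {A : Type*} [CommRing A] [Algebra R A]

theorem eval_aeval_update_X (v : σ → A) (b : σ) (f : MvPolynomial σ R) (s : A) :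
    (aeval (Function.update (fun i => Polynomial.C (v i)) b Polynomial.X) f).eval s =
      aeval (Function.update v b s) f := by
  induction f using MvPolynomial.induction_on with
  | C a => simp
  | add f g hf hg => simp [hf, hg]
  | mul_X f i hf =>
    simp only [map_mul, aeval_X, Polynomial.eval_mul, hf, Function.update_apply]
    split_ifs <;> simp

theorem aeval_update_X_eq_zero_of_forall_natCast [IsDomain A] [CharZero A] (v : σ → A) (b : σ)
    {w : A} (hw : w ≠ 0) {f : MvPolynomial σ R}
    (hf : ∀ t : ℕ, aeval (Function.update v b (v b + t * w)) f = 0) :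
    aeval (Function.update (fun i => Polynomial.C (v i)) b Polynomial.X) f = 0 := by
  set P := aeval (Function.update (fun i => Polynomial.C (v i)) b Polynomial.X) f
  set q : Polynomial A := Polynomial.C (v b) + Polynomial.C w * Polynomial.X
  have hcomp : P.comp q = 0 := Polynomial.eq_zero_of_infinite_isRoot _ <|
    Set.infinite_of_injective_forall_mem Nat.cast_injective fun t => by
      simp [P, q, Polynomial.IsRoot, eval_aeval_update_X, mul_comm w, hf t]
  rcases Polynomial.comp_eq_zero_iff.mp hcomp with h | ⟨-, hq⟩
  · exact h
  · exact absurd (by simpa [q] using congrArg (Polynomial.coeff · 1) hq) hw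

theorem aeval_partialCoeff_eq_zero_of_aeval_update_X_eq_zero (v : σ → A) (b : σ)
    {f : MvPolynomial σ R}
    (hf : aeval (Function.update (fun i => Polynomial.C (v i)) b Polynomial.X) f = 0)
    {c : σ →₀ ℕ} (hc : c ∈ partialSupport (· = b) f) :
    aeval v (partialCoeff (· = b) c f) = 0 := by
  set Φ := aeval (R := R) (Function.update (fun i => Polynomial.C (v i)) b Polynomial.X)
  have hsingle : ∀ c ∈ partialSupport (· = b) f, c = Finsupp.single b (c b) := fun c hc =>
    Finsupp.support_subset_singleton.mp fun i hi =>
      Finset.mem_singleton.mpr (of_mem_support_of_mem_partialSupport hc hi)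
  have hΦ : ∀ c ∈ partialSupport (· = b) f, Φ (monomial c 1 * partialCoeff (· = b) c f) =
      Polynomial.C (aeval v (partialCoeff (· = b) c f)) * Polynomial.X ^ (c b) := by
    intro c hc
    have hmon : Φ (monomial c 1) = Polynomial.X ^ (c b) := by
      rw [hsingle c hc, ← X_pow_eq_monomial, map_pow, aeval_X, Function.update_self,
        Finsupp.single_eq_same]
    have hcoeff : Φ (partialCoeff (· = b) c f) =
        Polynomial.C (aeval v (partialCoeff (· = b) c f)) :=
      calc Φ (partialCoeff (· = b) c f)
        _ = aeval (fun i => Polynomial.CAlgHom (v i)) (partialCoeff (· = b) c f) :=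
          aeval_eq_aeval_of_vars fun i hi =>
            Function.update_of_ne (of_mem_vars_partialCoeff hi).1 _ _
        _ = _ := (comp_aeval_apply v Polynomial.CAlgHom _).symm
    rw [map_mul, hmon, hcoeff, mul_comm]
  have hcoeff := congrArg (Polynomial.coeff · (c b)) hf
  rw [← sum_monomial_mul_partialCoeff (· = b) f] at hcoeff
  simp only [map_sum] at hcoeff
  rw [Finset.sum_congr rfl hΦ, Polynomial.finsetSum_coeff, Finset.sum_eq_single c] at hcoeff
  · rwa [Polynomial.coeff_C_mul_X_pow, if_pos rfl] at hcoeff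
  · intro c' hc' hne
    rw [Polynomial.coeff_C_mul_X_pow, if_neg]
    exact fun h => hne (by rw [hsingle c' hc', hsingle c hc, h])
  · exact fun h => absurd hc h

end Shear

section Ideal

variable {k : Type*} [Field k]

theorem monomial_mul_partialCoeff_mem {τ : MvPolynomial σ k →ₐ[k] MvPolynomial σ k}
    {I : Ideal (MvPolynomial σ k)} (hI : I ≤ I.comap τ) {ev : σ → k}
    (hX : ∀ i, X i ∈ τ.toEnd.maxGenEigenspace (ev i)) {p : σ → Prop} [DecidablePred p]
    (hev : ∀ i, ¬ p i → ev i = 1)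
    (hinj : Set.InjOn (fun c : σ →₀ ℕ => c.prod fun i e => ev i ^ e) {c | ∀ i ∈ c.support, p i})
    {f : MvPolynomial σ k} (hf : f ∈ I) :
    ∀ c ∈ partialSupport p f, monomial c 1 * partialCoeff p c f ∈ I := by
  refine Submodule.mem_of_sum_mem_of_mem_maxGenEigenspace (p := I.restrictScalars k)
    (T := τ.toEnd) (fun x hx => hI hx)
    (fun c hc c' hc' => hinj (fun i => of_mem_support_of_mem_partialSupport hc)
      (fun i => of_mem_support_of_mem_partialSupport hc')) (fun c _ => ?_) ?_
  · rw [← mul_one (c.prod _)]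
    exact τ.mul_mem_maxGenEigenspace (monomial_mem_maxGenEigenspace τ hX c 1)
      (mem_maxGenEigenspace_one_of_vars τ hX fun i hi => hev i (of_mem_vars_partialCoeff hi).1)
  · rwa [Submodule.restrictScalars_mem, sum_monomial_mul_partialCoeff]

theorem partialCoeff_mem_of_forall_aeval_update_mem [CharZero k] {I : Ideal (MvPolynomial σ k)}
    (hI : I.IsPrime) {a b : σ} (ha : X a ∉ I) {w : k} (hw : w ≠ 0) {g : MvPolynomial σ k}
    (hg : ∀ t : ℕ, aeval (Function.update X b (X b + C (t * w) * X a)) g ∈ I) :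
    ∀ c ∈ partialSupport (· = b) g, partialCoeff (· = b) c g ∈ I := by
  let π := Ideal.Quotient.mkₐ k I
  have : IsDomain (MvPolynomial σ k ⧸ I) := Ideal.Quotient.isDomain I
  have : CharZero (MvPolynomial σ k ⧸ I) :=
    charZero_of_injective_algebraMap (algebraMap k _).injective
  have hmem : ∀ h, h ∈ I ↔ aeval (fun i => π (X i)) h = 0 := fun h => by
    rw [← comp_aeval_apply, aeval_X_left_apply, Ideal.Quotient.mkₐ_eq_mk,
      Ideal.Quotient.eq_zero_iff_mem]
  have hW : π (C w * X a) ≠ 0 := by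
    rw [Ne, Ideal.Quotient.mkₐ_eq_mk, Ideal.Quotient.eq_zero_iff_mem]
    intro h
    apply ha
    simpa [← mul_assoc, ← C_mul, hw] using I.mul_mem_left (C w⁻¹) h
  have hzero := aeval_update_X_eq_zero_of_forall_natCast (fun i => π (X i)) b hW fun t => by
    have hπ : π (aeval (Function.update X b (X b + C (t * w) * X a)) g) = 0 := by
      rw [Ideal.Quotient.mkₐ_eq_mk, Ideal.Quotient.eq_zero_iff_mem]
      exact hg t
    have hupd : (fun i => π (Function.update X b (X b + C (t * w) * X a) i)) =
        Function.update (fun i => π (X i)) b (π (X b) + t * π (C w * X a)) := by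
      funext i
      rw [Function.apply_update (fun _ => π)]
      simp [C_mul, mul_assoc]
    rwa [comp_aeval_apply, hupd] at hπ
  exact fun c hc => (hmem _).mpr (aeval_partialCoeff_eq_zero_of_aeval_update_X_eq_zero _ b hzero hc)

end Ideal

end MvPolynomial

open MvPolynomial

theorem Ideal.IsPrime.mem_of_monomial_mul_mem {R σ : Type*} [CommRing R]
    {I : Ideal (MvPolynomial σ R)} (hI : I.IsPrime) (hX : ∀ i, X i ∉ I) {c : σ →₀ ℕ}
    {g : MvPolynomial σ R} (h : monomial c 1 * g ∈ I) : g ∈ I := by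
  refine (hI.mem_or_mem h).resolve_left fun hc => ?_
  rw [← prod_X_pow_eq_monomial, Ideal.IsPrime.prod_mem_iff] at hc
  obtain ⟨i, -, hi⟩ := hc
  exact hX i (hI.mem_of_pow_mem _ hi)

theorem Fin.val_one_of_one_le {n : ℕ} (hn : 1 ≤ n) : ((1 : Fin (n + 1)) : ℕ) = 1 := by
  rw [Fin.val_one', Nat.mod_eq_of_lt (by omega)]

section

variable {k : Type*} [Field k] {n : ℕ} {mu : Fin (n + 1) → k}
  {σ : MvPolynomial (Fin (n + 1)) k →ₐ[k] MvPolynomial (Fin (n + 1)) k}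

theorem X_mem_maxGenEigenspace_pow (hn : 1 ≤ n) {r N : ℕ} (hr1 : 1 ≤ r)
    (hN : ∀ i : Fin (n + 1), 2 ≤ (i : ℕ) → (i : ℕ) ≤ r → mu i ^ N = 1)
    (hσ0 : σ (X 0) = X 0) (hσ1 : σ (X 1) = X 1 + X 0)
    (hσ : ∀ i : Fin (n + 1), 2 ≤ (i : ℕ) → σ (X i) = mu i • X i) (i : Fin (n + 1)) :
    X i ∈ (σ ^ N).toEnd.maxGenEigenspace (if (i : ℕ) ≤ r then 1 else mu i ^ N) := by
  have hpow0 : (σ ^ N) (X 0) = X 0 := by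
    simpa using σ.pow_apply_of_apply_eq_smul (c := 1) (by rw [one_smul, hσ0]) N
  rcases (show (i : ℕ) = 0 ∨ (i : ℕ) = 1 ∨ 2 ≤ (i : ℕ) by omega) with hi | hi | hi
  · obtain rfl : i = 0 := Fin.ext hi
    rw [if_pos (by simp)]
    exact (σ ^ N).mem_maxGenEigenspace_of_apply_eq_smul (by rw [hpow0, one_smul])
  · obtain rfl : i = 1 := Fin.ext (hi.trans (Fin.val_one_of_one_le hn).symm)
    rw [if_pos (by omega)]
    exact (σ ^ N).mem_maxGenEigenspace_one_of_apply_eq_add (by rw [map_nsmul, hpow0])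
      (σ.pow_apply_of_apply_eq_add hσ0 hσ1 N)
  · split_ifs with hir
    · exact (σ ^ N).mem_maxGenEigenspace_of_apply_eq_smul
        (by rw [σ.pow_apply_of_apply_eq_smul (hσ i hi), hN i hi hir, one_smul])
    · exact (σ ^ N).mem_maxGenEigenspace_of_apply_eq_smul
        (σ.pow_apply_of_apply_eq_smul (hσ i hi) N)

theorem pow_mul_apply_eq_aeval_update (hn : 1 ≤ n) {r N : ℕ}
    (hN : ∀ i : Fin (n + 1), 2 ≤ (i : ℕ) → (i : ℕ) ≤ r → mu i ^ N = 1)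
    (hσ0 : σ (X 0) = X 0) (hσ1 : σ (X 1) = X 1 + X 0)
    (hσ : ∀ i : Fin (n + 1), 2 ≤ (i : ℕ) → σ (X i) = mu i • X i) (t : ℕ)
    {g : MvPolynomial (Fin (n + 1)) k} (hg : ∀ j ∈ g.vars, (j : ℕ) ≤ r) :
    (σ ^ (N * t)) g = aeval (Function.update X 1 (X 1 + C (t * N : k) * X 0)) g := by
  conv_lhs => rw [← aeval_X_left_apply g, comp_aeval_apply]
  refine aeval_eq_aeval_of_vars fun j hj => ?_
  by_cases hj1 : j = 1
  · rw [hj1, Function.update_self, σ.pow_apply_of_apply_eq_add hσ0 hσ1, nsmul_eq_mul]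
    simp [mul_comm]
  rw [Function.update_of_ne hj1]
  rcases (show (j : ℕ) = 0 ∨ 2 ≤ (j : ℕ) by
    have := Fin.val_one_of_one_le hn; have := Fin.val_ne_of_ne hj1; omega) with hj0 | hj2
  · obtain rfl : j = 0 := Fin.ext hj0
    simpa using σ.pow_apply_of_apply_eq_smul (c := 1) (by rw [one_smul, hσ0]) (N * t)
  · rw [σ.pow_apply_of_apply_eq_smul (hσ j hj2), pow_mul, hN j hj2 (hg j hj), one_pow, one_smul]

theorem injOn_prod_pow_of_indep {r N : ℕ} (hN : 0 < N)
    (hne : ∀ i : Fin (n + 1), r < (i : ℕ) → mu i ≠ 0)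
    (hindep : ∀ c : Fin (n + 1) → ℤ,
      (∏ i ∈ Finset.univ.filter (fun i : Fin (n + 1) => r < (i : ℕ)), mu i ^ c i) = 1 →
      ∀ i : Fin (n + 1), r < (i : ℕ) → c i = 0) :
    Set.InjOn
      (fun c : Fin (n + 1) →₀ ℕ => c.prod fun i e => (if (i : ℕ) ≤ r then 1 else mu i ^ N) ^ e)
      {c | ∀ i ∈ c.support, r < (i : ℕ)} := by
  set s := Finset.univ.filter (fun i : Fin (n + 1) => r < (i : ℕ))
  have hprod : ∀ c : Fin (n + 1) →₀ ℕ, (∀ i ∈ c.support, r < (i : ℕ)) →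
      (c.prod fun i e => (if (i : ℕ) ≤ r then 1 else mu i ^ N) ^ e) =
        ∏ i ∈ s, mu i ^ (N * c i) := by
    intro c hc
    rw [Finsupp.prod_of_support_subset c
      (fun i hi => Finset.mem_filter.mpr ⟨Finset.mem_univ i, hc i hi⟩) _ fun _ _ => pow_zero _]
    refine Finset.prod_congr rfl fun i hi => ?_
    rw [if_neg (not_le.mpr (Finset.mem_filter.mp hi).2), pow_mul]
  intro c hc c' hc' h
  have hexp := Finset.eq_of_prod_pow_eq_prod_pow (fun i hi => hne i (Finset.mem_filter.mp hi).2)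
    (fun e he i hi => hindep e he i (Finset.mem_filter.mp hi).2)
    (by simpa only [hprod c hc, hprod c' hc'] using h)
  ext i
  by_cases hi : r < (i : ℕ)
  · exact Nat.eq_of_mul_eq_mul_left hN (hexp i (Finset.mem_filter.mpr ⟨Finset.mem_univ i, hi⟩))
  · rw [Finsupp.notMem_support_iff.mp fun h => hi (hc i h),
      Finsupp.notMem_support_iff.mp fun h => hi (hc' i h)]

end

theorem statement5_general {k : Type*} [Field k] [CharZero k]
    (n r : ℕ) (hn : 1 ≤ n) (hr1 : 1 ≤ r)
    (mu : Fin (n + 1) → k)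
    (hroots : ∀ i : Fin (n + 1), 2 ≤ (i : ℕ) → (i : ℕ) ≤ r → ∃ N : ℕ, 1 ≤ N ∧ mu i ^ N = 1)
    (hne : ∀ i : Fin (n + 1), r < (i : ℕ) → mu i ≠ 0)
    (hindep : ∀ c : Fin (n + 1) → ℤ,
      (∏ i ∈ Finset.univ.filter (fun i : Fin (n + 1) => r < (i : ℕ)), mu i ^ c i) = 1 →
      ∀ i : Fin (n + 1), r < (i : ℕ) → c i = 0)
    (σ : MvPolynomial (Fin (n + 1)) k →ₐ[k] MvPolynomial (Fin (n + 1)) k)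
    (hσ0 : σ (X 0) = X 0) (hσ1 : σ (X 1) = X 1 + X 0)
    (hσ : ∀ i : Fin (n + 1), 2 ≤ (i : ℕ) → σ (X i) = mu i • X i)
    (I : Ideal (MvPolynomial (Fin (n + 1)) k)) (hprime : I.IsPrime)
    (hinv : I.map (σ : MvPolynomial (Fin (n + 1)) k →+* MvPolynomial (Fin (n + 1)) k) = I)
    (hX : ∀ i : Fin (n + 1), X i ∉ I) :
    I = (Ideal.span ((I : Set (MvPolynomial (Fin (n + 1)) k)) ∩
          {p | ∀ j ∈ p.vars, (j : ℕ) ≠ 1 ∧ (j : ℕ) ≤ r})).radical := by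
  classical
  obtain ⟨N, hN, hNroot⟩ :
      ∃ N, 0 < N ∧ ∀ i : Fin (n + 1), 2 ≤ (i : ℕ) → (i : ℕ) ≤ r → mu i ^ N = 1 := by
    obtain ⟨N, hN, h⟩ :=
      (Finset.univ.filter fun i : Fin (n + 1) => 2 ≤ (i : ℕ) ∧ (i : ℕ) ≤ r).exists_pos_pow_eq_one
        fun i hi => hroots i (Finset.mem_filter.mp hi).2.1 (Finset.mem_filter.mp hi).2.2
    exact ⟨N, hN, fun i h2 hr => h i (Finset.mem_filter.mpr ⟨Finset.mem_univ i, h2, hr⟩)⟩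
  have hσI := Ideal.le_comap_pow_of_le_comap (Ideal.map_le_iff_le_comap.mp hinv.le)
  refine le_antisymm (fun f hf => Ideal.le_radical ?_)
    ((Ideal.radical_mono (Ideal.span_le.mpr Set.inter_subset_left)).trans hprime.radical.le)
  rw [← sum_monomial_mul_partialCoeff (fun i : Fin (n + 1) => r < (i : ℕ)) f]
  refine Ideal.sum_mem _ fun c hc => Ideal.mul_mem_left _ _ ?_
  set g := partialCoeff (fun i : Fin (n + 1) => r < (i : ℕ)) c f
  have hgvars : ∀ j ∈ g.vars, (j : ℕ) ≤ r := fun j hj =>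
    not_lt.mp (of_mem_vars_partialCoeff hj).1
  have hg : g ∈ I := hprime.mem_of_monomial_mul_mem hX <|
    monomial_mul_partialCoeff_mem (hσI N) (X_mem_maxGenEigenspace_pow hn hr1 hNroot hσ0 hσ1 hσ)
      (fun i hi => if_pos (not_lt.mp hi)) (injOn_prod_pow_of_indep hN hne hindep) hf c hc
  rw [← sum_monomial_mul_partialCoeff (· = 1) g]
  refine Ideal.sum_mem _ fun b hb =>
    Ideal.mul_mem_left _ _ (Ideal.subset_span ⟨?_, fun j hj => ?_⟩)
  · refine partialCoeff_mem_of_forall_aeval_update_mem hprime (hX 0)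
      (Nat.cast_ne_zero.mpr hN.ne') (fun t => ?_) b hb
    rw [← pow_mul_apply_eq_aeval_update hn hNroot hσ0 hσ1 hσ t hgvars]
    exact hσI _ hg
  · obtain ⟨hj1, hjg⟩ := of_mem_vars_partialCoeff hj
    exact ⟨fun h => hj1 (Fin.ext (h.trans (Fin.val_one_of_one_le hn).symm)), hgvars j hjg⟩

/-- ideal-theoretic form of Lemma 3.1(2) of the paper.
Let `k` be algebraically closed of characteristic 0, `n ≥ 1`, `1 ≤ r ≤ n`.
Let `μ 2, …, μ r` be roots of unity, `μ (r+1), …, μ n` nonzero and multiplicatively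
independent, and let `σ` be the `k`-algebra automorphism of `k[x_0, …, x_n]` with
`σ x_0 = x_0`, `σ x_1 = x_1 + x_0`, and `σ x_i = μ i • x_i` for `2 ≤ i`.  If `I` is a
homogeneous prime ideal with `σ(I) = I` and `x i ∉ I` for all `i`, then `I` equals the
radical of the ideal generated by its elements involving only the variables
`x_0, x_2, …, x_r`. -/
theorem statement5 {k : Type*} [Field k] [CharZero k] [IsAlgClosed k]
    (n r : ℕ) (hn : 1 ≤ n) (hr1 : 1 ≤ r) (hrn : r ≤ n)
    (mu : Fin (n + 1) → k)
    (hroots : ∀ i : Fin (n + 1), 2 ≤ (i : ℕ) → (i : ℕ) ≤ r → ∃ N : ℕ, 1 ≤ N ∧ mu i ^ N = 1)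
    (hne : ∀ i : Fin (n + 1), r < (i : ℕ) → mu i ≠ 0)
    (hindep : ∀ c : Fin (n + 1) → ℤ,
      (∏ i ∈ Finset.univ.filter (fun i : Fin (n + 1) => r < (i : ℕ)), mu i ^ c i) = 1 →
      ∀ i : Fin (n + 1), r < (i : ℕ) → c i = 0)
    (σ : MvPolynomial (Fin (n + 1)) k →ₐ[k] MvPolynomial (Fin (n + 1)) k)
    (hσ0 : σ (X 0) = X 0) (hσ1 : σ (X 1) = X 1 + X 0)
    (hσ : ∀ i : Fin (n + 1), 2 ≤ (i : ℕ) → σ (X i) = mu i • X i)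
    (I : Ideal (MvPolynomial (Fin (n + 1)) k)) (hprime : I.IsPrime)
    (hhom : ∃ S : Set (MvPolynomial (Fin (n + 1)) k),
      (∀ p ∈ S, ∃ d : ℕ, p.IsHomogeneous d) ∧ I = Ideal.span S)
    (hinv : I.map (σ : MvPolynomial (Fin (n + 1)) k →+* MvPolynomial (Fin (n + 1)) k) = I)
    (hX : ∀ i : Fin (n + 1), X i ∉ I) :
    I = (Ideal.span ((I : Set (MvPolynomial (Fin (n + 1)) k)) ∩
          {p | ∀ j ∈ p.vars, (j : ℕ) ≠ 1 ∧ (j : ℕ) ≤ r})).radical :=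
  statement5_general n r hn hr1 mu hroots hne hindep σ hσ0 hσ1 hσ I hprime hinv hX
end
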